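/- arXiv:1512.03038 — 5 statements merged into one kernel-verified Lean document; each statement's English description precedes it below -/
import Mathlib

section
/- Let G be a finite abelian group of order n, let p be the smallest prime divisor of n, and let h ≥ 2 and m ≥ 1 be integers with p > hm − h + 1. Then for an m-element subset A of G one has |hA| = hm − h + 1 if and only if A is an arithmetic progression in G, i.e., A = {a, a+g, a+2g, …, a+(m−1)g} for some elements a, g of G. -/
/-!
Cauchy–Davenport holds below `p` in every abelian group whose nonzero elements have order at
least `p`, which is what `p` being the least prime factor of `|G|` provides. Iterated, it gives
`|hA| ≥ |A + A| + (h - 2)(|A| - 1)`, so `|hA| = h(|A| - 1) + 1 < p` forces `|A + A| = 2|A| - 1`,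
and what remains is Vosper's theorem in this setting: a critical pair
`|A + B| = |A| + |B| - 1 ≤ p - 2` consists of arithmetic progressions with a common difference.

That is proved by induction on `|B|`. A Dyson e-transform leaving `B` with between `2` and `|B| - 1`
elements preserves `A + B` and `|A| + |B|`, so by induction `A + B` is a progression with some
difference `g`. The complement `K` of `A + B` in its `⟨g⟩`-coset is a progression and `-B + K`
misses `A`, so `(-B, K)` is critical as well; and a set whose sum with a progression of
difference `g` is critical is itself one, because adding `g`-steps grows a set unless it is
`g`-periodic. If no e-transform shrinks `B` like that, every translate of `B` lies in `A` or meets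
it at most once. Comparing translates shows that `a - b₀ + B ⊆ A` for all but one `a ∈ A`, so
`|A ∪ (A + d)| = |A| + 1` for `d ∈ B - b₀`, which makes `A` a progression with difference `d`.
-/

/-- The `h`-fold sumset of a finite subset `A` of an abelian group: all sums of `h`
elements of `A` (with repetition allowed). -/
def foldSum {G : Type*} [AddCommGroup G] [DecidableEq G] (h : ℕ) (A : Finset G) : Finset G :=
  (Fintype.piFinset fun _ : Fin h => A).image fun f => ∑ i, f i

open Finset Pointwise

section ArithProg

variable {G : Type*} [AddCommGroup G] [DecidableEq G] {a b g x : G} {j k : ℕ}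

def arithProg (a g : G) (k : ℕ) : Finset G := (range k).image fun i => a + i • g

def IsArithProg (g : G) (A : Finset G) : Prop := ∃ a, A = arithProg a g #A

lemma mem_arithProg : x ∈ arithProg a g k ↔ ∃ i < k, a + i • g = x := by
  simp [arithProg]

lemma arithProg_nonempty (hk : k ≠ 0) : (arithProg a g k).Nonempty :=
  (nonempty_range_iff.2 hk).image _

lemma card_arithProg_le : #(arithProg a g k) ≤ k :=
  card_image_le.trans_eq (card_range k)

lemma card_arithProg (hk : k ≤ addOrderOf g) : #(arithProg a g k) = k := by
  rw [arithProg, card_image_of_injOn, card_range]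
  intro i hi j hj hij
  simp only [coe_range, Set.mem_Iio] at hi hj
  exact nsmul_injOn_Iio_addOrderOf (hi.trans_le hk) (hj.trans_le hk) (add_left_cancel hij)

lemma arithProg_one : arithProg a g 1 = {a} := by
  simp [arithProg]

lemma arithProg_zero_right (hk : k ≠ 0) : arithProg a 0 k = {a} := by
  simp [arithProg, image_const, hk]

lemma arithProg_succ : arithProg a g (k + 1) = insert (a + k • g) (arithProg a g k) := by
  rw [arithProg, range_add_one, image_insert, arithProg]

lemma arithProg_succ_eq_union_vadd (hk : k ≠ 0) :
    arithProg a g (k + 1) = arithProg a g k ∪ (g +ᵥ arithProg a g k) := by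
  ext x
  simp only [mem_union, mem_vadd_finset, mem_arithProg, vadd_eq_add]
  constructor
  · rintro ⟨i, hi, rfl⟩
    rcases Nat.lt_succ_iff_lt_or_eq.1 hi with hi | rfl
    · exact Or.inl ⟨i, hi, rfl⟩
    · obtain ⟨i, rfl⟩ := Nat.exists_eq_succ_of_ne_zero hk
      exact Or.inr ⟨_, ⟨i, by omega, rfl⟩, by rw [succ_nsmul]; abel⟩
  · rintro (⟨i, hi, rfl⟩ | ⟨_, ⟨i, hi, rfl⟩, rfl⟩)
    · exact ⟨i, by omega, rfl⟩
    · exact ⟨i + 1, by omega, by rw [succ_nsmul]; abel⟩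

lemma arithProg_add_arithProg (hj : j ≠ 0) (hk : k ≠ 0) :
    arithProg a g j + arithProg b g k = arithProg (a + b) g (j + k - 1) := by
  ext x
  simp only [mem_add, mem_arithProg]
  constructor
  · rintro ⟨_, ⟨i, hi, rfl⟩, _, ⟨l, hl, rfl⟩, rfl⟩
    exact ⟨i + l, by omega, by rw [add_nsmul]; abel⟩
  · rintro ⟨i, hi, rfl⟩
    refine ⟨_, ⟨min i (j - 1), by omega, rfl⟩, _, ⟨i - min i (j - 1), by omega, rfl⟩, ?_⟩
    rw [add_add_add_comm, ← add_nsmul, Nat.add_sub_cancel' (min_le_left _ _)]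

lemma nsmul_arithProg (hk : k ≠ 0) :
    ∀ h : ℕ, h • arithProg a g k = arithProg (h • a) g (h * (k - 1) + 1)
  | 0 => by rw [zero_nsmul, zero_nsmul, zero_mul, zero_add, arithProg_one]; rfl
  | h + 1 => by
    rw [succ_nsmul, nsmul_arithProg hk h, arithProg_add_arithProg (by omega) hk, succ_nsmul,
      Nat.succ_mul]
    congr 1
    omega

lemma neg_arithProg : -arithProg a g k = arithProg (-a) (-g) k := by
  ext x
  simp only [mem_neg, mem_arithProg, smul_neg, ← neg_add]
  constructor
  · rintro ⟨_, ⟨i, hi, rfl⟩, rfl⟩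
    exact ⟨i, hi, rfl⟩
  · rintro ⟨i, hi, rfl⟩
    exact ⟨_, ⟨i, hi, rfl⟩, rfl⟩

lemma IsArithProg.neg {A : Finset G} (hA : IsArithProg g A) : IsArithProg (-g) (-A) := by
  obtain ⟨a, ha⟩ := hA
  exact ⟨-a, by rw [card_neg, ← neg_arithProg, ← ha]⟩

lemma mem_arithProg_addOrderOf (hg : 0 < addOrderOf g) :
    x ∈ arithProg a g (addOrderOf g) ↔ x - a ∈ AddSubgroup.zmultiples g := by
  rw [(addOrderOf_pos_iff.1 hg).mem_zmultiples_iff_mem_range_addOrderOf, mem_arithProg]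
  simp only [mem_image, mem_range, eq_sub_iff_add_eq, add_comm]

end ArithProg

section Growth

variable {G : Type*} [AddCommGroup G] [DecidableEq G] {a g : G} {k : ℕ} {X Y : Finset G}

lemma addOrderOf_le_card_of_vadd_subset (hY : Y.Nonempty) (h : g +ᵥ Y ⊆ Y) :
    addOrderOf g ≤ #Y := by
  obtain ⟨y, hy⟩ := hY
  have hmem : ∀ i : ℕ, y + i • g ∈ Y := by
    intro i
    induction i with
    | zero => simpa using hy
    | succ i ih =>
      rw [succ_nsmul', add_left_comm]
      exact h (vadd_mem_vadd_finset ih)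
  calc addOrderOf g = #(arithProg y g (addOrderOf g)) := (card_arithProg le_rfl).symm
    _ ≤ #Y := card_le_card fun x hx => by
      obtain ⟨i, -, rfl⟩ := mem_arithProg.1 hx
      exact hmem i

lemma card_lt_card_union_vadd (hY : Y.Nonempty) (h : #Y < addOrderOf g) :
    #Y < #(Y ∪ (g +ᵥ Y)) := by
  by_contra! hle
  have hunion : Y ∪ (g +ᵥ Y) = Y := (eq_of_subset_of_card_le subset_union_left hle).symm
  exact (addOrderOf_le_card_of_vadd_subset hY (subset_union_right.trans hunion.subset)).not_gt h

lemma isArithProg_of_card_union_vadd_le (hX : X.Nonempty) (hord : #X < addOrderOf g)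
    (h : #(X ∪ (g +ᵥ X)) ≤ #X + 1) : IsArithProg g X := by
  obtain ⟨x₀, hx₀⟩ : ∃ x₀, X \ (g +ᵥ X) = {x₀} := by
    have hsdiff := card_sdiff_add_card X (g +ᵥ X)
    rw [card_vadd_finset] at hsdiff
    refine card_eq_one.1 (le_antisymm (by omega) (card_pos.2 (sdiff_nonempty.2 fun hsub => ?_)))
    have hXg : X = g +ᵥ X := eq_of_subset_of_card_le hsub (card_vadd_finset g X).le
    exact (addOrderOf_le_card_of_vadd_subset hX hXg.symm.subset).not_gt hord
  -- Walking from `y ∈ X` along `-g`, one stays in `X` until reaching `x₀`.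
  have hwalk : ∀ y ∈ X, ∀ n, (∃ i < n, x₀ + i • g = y) ∨ arithProg y (-g) (n + 1) ⊆ X := by
    intro y hy n
    induction n with
    | zero => exact Or.inr (by rw [zero_add, arithProg_one]; exact singleton_subset_iff.2 hy)
    | succ n ih =>
      obtain ⟨i, hi, hiy⟩ | hsub := ih
      · exact Or.inl ⟨i, by omega, hiy⟩
      have hz : y + n • -g ∈ X := hsub (mem_arithProg.2 ⟨n, by omega, rfl⟩)
      by_cases hzg : y + n • -g ∈ g +ᵥ X
      · obtain ⟨w, hw, hwz⟩ := mem_vadd_finset.1 hzg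
        refine Or.inr ?_
        rw [arithProg_succ]
        refine insert_subset ?_ hsub
        rw [vadd_eq_add] at hwz
        convert hw using 1
        rw [succ_nsmul, ← add_assoc, ← hwz]
        abel
      · have hx₀z : y + n • -g ∈ X \ (g +ᵥ X) := mem_sdiff.2 ⟨hz, hzg⟩
        rw [hx₀, mem_singleton] at hx₀z
        exact Or.inl ⟨n, by omega, by rw [← hx₀z, smul_neg]; abel⟩
  have hsub : X ⊆ arithProg x₀ g #X := by
    intro y hy
    obtain hy' | hsub := hwalk y hy #X
    · exact mem_arithProg.2 hy'
    · have := card_le_card hsub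
      rw [card_arithProg (by rw [addOrderOf_neg]; omega)] at this
      omega
  exact ⟨x₀, eq_of_subset_of_card_le hsub card_arithProg_le⟩

lemma add_arithProg_succ (hk : k ≠ 0) (X : Finset G) :
    X + arithProg a g (k + 1) = (X + arithProg a g k) ∪ (g +ᵥ (X + arithProg a g k)) := by
  rw [arithProg_succ_eq_union_vadd hk, add_union, add_vadd_comm]

lemma card_add_arithProg_two (X : Finset G) : #(X + arithProg a g 2) = #(X ∪ (g +ᵥ X)) := by
  rw [add_arithProg_succ one_ne_zero, arithProg_one, add_comm, singleton_add, vadd_comm,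
    ← vadd_finset_union, card_vadd_finset]

lemma card_union_vadd_add_le_card_add_arithProg (hX : X.Nonempty) :
    ∀ j, #(X + arithProg a g (j + 2)) < addOrderOf g →
      #(X ∪ (g +ᵥ X)) + j ≤ #(X + arithProg a g (j + 2))
  | 0, _ => (card_add_arithProg_two X).ge
  | j + 1, h => by
    rw [show j + 1 + 2 = j + 2 + 1 from rfl, add_arithProg_succ (by omega)] at h ⊢
    have hY : #(X + arithProg a g (j + 2)) ≤
        #((X + arithProg a g (j + 2)) ∪ (g +ᵥ (X + arithProg a g (j + 2)))) :=
      card_le_card subset_union_left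
    have := card_union_vadd_add_le_card_add_arithProg hX j (hY.trans_lt h)
    have := card_lt_card_union_vadd (hX.add (arithProg_nonempty (by omega))) (hY.trans_lt h)
    omega

lemma isArithProg_of_card_add_arithProg_le (hX : X.Nonempty) (hk : 2 ≤ k)
    (hord : #(X + arithProg a g k) < addOrderOf g) (h : #(X + arithProg a g k) + 1 ≤ #X + k) :
    IsArithProg g X := by
  obtain ⟨j, rfl⟩ := Nat.exists_eq_add_of_le' hk
  have := card_union_vadd_add_le_card_add_arithProg hX j hord
  have := card_le_card_add_right (s := X)
    (arithProg_nonempty (a := a) (g := g) (by omega : j + 2 ≠ 0))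
  exact isArithProg_of_card_union_vadd_le hX (by omega) (by omega)

end Growth

section CriticalPair

variable {G : Type*} [AddCommGroup G] [DecidableEq G] {A B : Finset G} {c g : G}

lemma isArithProg_neg_of_add_eq_arithProg (hA : A.Nonempty) (hB : B.Nonempty)
    (hg : #A + #B + 1 ≤ addOrderOf g) (hsum : A + B = arithProg c g (#A + #B - 1)) :
    IsArithProg g (-B) := by
  set N := #A + #B - 1
  set Z := AddSubgroup.zmultiples g
  have hd : 0 < addOrderOf g := by omega
  -- `K` is the complement of `A + B` in the coset `c + Z`, so `-B + K` misses `A`.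
  set K := arithProg (c + N • g) g (addOrderOf g - N)
  have hAB : ∀ a ∈ A, ∀ b ∈ B, a + b - c ∈ Z := by
    intro a ha b hb
    obtain ⟨i, -, hi⟩ := mem_arithProg.1 (hsum ▸ add_mem_add ha hb)
    rw [← hi, add_sub_cancel_left]
    exact AddSubgroup.nsmul_mem_zmultiples g i
  have hK : ∀ k ∈ K, k ∉ A + B ∧ k - c ∈ Z := by
    intro k hk
    obtain ⟨i, hi, rfl⟩ := mem_arithProg.1 hk
    refine ⟨fun hmem => ?_, by
      rw [add_assoc, add_sub_cancel_left, ← add_nsmul]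
      exact AddSubgroup.nsmul_mem_zmultiples g _⟩
    obtain ⟨j, hj, hji⟩ := mem_arithProg.1 (hsum ▸ hmem)
    rw [add_assoc, ← add_nsmul] at hji
    have := nsmul_injOn_Iio_addOrderOf (x := g) (Set.mem_Iio.2 (by omega : j < addOrderOf g))
      (Set.mem_Iio.2 (by omega : N + i < addOrderOf g)) (add_left_cancel hji)
    omega
  obtain ⟨a₀, ha₀⟩ := hA
  obtain ⟨b₀, hb₀⟩ := hB
  have hsub : -B + K ⊆ arithProg a₀ g (addOrderOf g) \ A := by
    intro x hx
    obtain ⟨y, hy, k, hk, rfl⟩ := mem_add.1 hx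
    rw [mem_neg'] at hy
    refine mem_sdiff.2 ⟨(mem_arithProg_addOrderOf hd).2 ?_, fun hyk => (hK k hk).1 ?_⟩
    · rw [show y + k - a₀ = (k - c) - (a₀ + -y - c) by abel]
      exact Z.sub_mem (hK k hk).2 (hAB a₀ ha₀ _ hy)
    · simpa using add_mem_add hyk hy
  have hAsub : A ⊆ arithProg a₀ g (addOrderOf g) := fun a ha => by
    rw [mem_arithProg_addOrderOf hd, show a - a₀ = (a + b₀ - c) - (a₀ + b₀ - c) by abel]
    exact Z.sub_mem (hAB a ha b₀ hb₀) (hAB a₀ ha₀ b₀ hb₀)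
  have hcard := card_le_card hsub
  rw [card_sdiff_of_subset hAsub, card_arithProg le_rfl] at hcard
  have := card_pos.2 ⟨a₀, ha₀⟩
  have hKcard : #(-B + K) + 1 ≤ #(-B) + (addOrderOf g - N) := by rw [card_neg]; omega
  exact isArithProg_of_card_add_arithProg_le ⟨-b₀, by simpa⟩ (by omega)
    (by omega : #(-B + K) < addOrderOf g) hKcard

lemma isArithProg_of_add_eq_arithProg (hA : A.Nonempty) (hB : B.Nonempty)
    (hg : #A + #B + 1 ≤ addOrderOf g) (hsum : A + B = arithProg c g (#A + #B - 1)) :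
    IsArithProg (-g) A ∧ IsArithProg (-g) B := by
  have hsum' : B + A = arithProg c g (#B + #A - 1) := by rw [add_comm, hsum, add_comm #A]
  constructor
  · simpa using (isArithProg_neg_of_add_eq_arithProg hB hA (by omega) hsum').neg
  · simpa using (isArithProg_neg_of_add_eq_arithProg hA hB hg hsum).neg

variable {p : ℕ}

lemma card_add_card_le_card_add_add_one (hord : ∀ x : G, x ≠ 0 → p ≤ addOrderOf x)
    (hA : A.Nonempty) (hB : B.Nonempty) (hp : #(A + B) < p) : #A + #B ≤ #(A + B) + 1 := by
  have hmin : (p : ℕ∞) ≤ AddMonoid.minOrder G :=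
    AddMonoid.le_minOrder.2 fun x hx _ => by exact_mod_cast hord x hx
  rcases min_le_iff.1 (cauchy_davenport_minOrder_add hA hB) with h | h
  · exact absurd (by exact_mod_cast hmin.trans h) hp.not_ge
  · have : #A + #B - 1 ≤ #(A + B) := by exact_mod_cast h
    omega

lemma eq_of_vadd_finset_eq_of_card_lt (hord : ∀ x : G, x ≠ 0 → p ≤ addOrderOf x) {Y : Finset G}
    (hY : Y.Nonempty) (hYp : #Y < p) {x y : G} (h : x +ᵥ Y = y +ᵥ Y) : x = y := by
  by_contra hne
  have hxy : (x - y) +ᵥ Y = Y := by rw [sub_eq_neg_add, add_vadd, h, neg_vadd_vadd]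
  have := addOrderOf_le_card_of_vadd_subset hY hxy.subset
  have := hord _ (sub_ne_zero.2 hne)
  omega

lemma vadd_erase_eq_add_sdiff_vadd {a b₀ : G} (ha : a ∈ A) (hb₀ : b₀ ∈ B)
    (hcrit : #(A + B) + 1 = #A + #B) (hone : #(B ∩ ((b₀ - a) +ᵥ A)) ≤ 1) :
    a +ᵥ B.erase b₀ = (A + B) \ (b₀ +ᵥ A) := by
  have hsub : b₀ +ᵥ A ⊆ A + B := by
    rw [← singleton_add, add_comm]
    exact add_subset_add_left (singleton_subset_iff.2 hb₀)
  refine eq_of_subset_of_card_le (fun x hx => ?_) ?_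
  · obtain ⟨b, hb, rfl⟩ := mem_vadd_finset.1 hx
    obtain ⟨hne, hb⟩ := mem_erase.1 hb
    refine mem_sdiff.2 ⟨add_mem_add ha hb, fun hmem => hne ?_⟩
    obtain ⟨a', ha', he⟩ := mem_vadd_finset.1 hmem
    have hb' : b ∈ (b₀ - a) +ᵥ A :=
      mem_vadd_finset.2 ⟨a', ha', by
        simp only [vadd_eq_add] at he ⊢
        rw [sub_add_eq_add_sub, he]
        abel⟩
    have hb₀' : b₀ ∈ (b₀ - a) +ᵥ A := mem_vadd_finset.2 ⟨a, ha, by simp⟩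
    exact card_le_one.1 hone _ (mem_inter.2 ⟨hb, hb'⟩) _ (mem_inter.2 ⟨hb₀, hb₀'⟩)
  · rw [card_sdiff_of_subset hsub, card_vadd_finset, card_vadd_finset, card_erase_of_mem hb₀]
    omega

lemma add_subset_vadd_of_forall_subset_sub_vadd {b₀ : G} (h : ∀ a ∈ A, B ⊆ (b₀ - a) +ᵥ A) :
    A + B ⊆ b₀ +ᵥ A := by
  intro x hx
  obtain ⟨a, ha, b, hb, rfl⟩ := mem_add.1 hx
  obtain ⟨a', ha', he⟩ := mem_vadd_finset.1 (h a ha hb)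
  exact mem_vadd_finset.2 ⟨a', ha', by rw [vadd_eq_add] at he ⊢; rw [← he]; abel⟩

-- The case of a critical pair in which no Dyson e-transform properly shrinks `B`.
lemma exists_isArithProg_of_card_inter_vadd_le_one_or_subset
    (hord : ∀ x : G, x ≠ 0 → p ≤ addOrderOf x) (hA : 2 ≤ #A) (hB : 2 ≤ #B)
    (hp : #A + #B + 1 ≤ p) (hcrit : #(A + B) + 1 = #A + #B)
    (hstuck : ∀ e : G, #(B ∩ (e +ᵥ A)) ≤ 1 ∨ B ⊆ e +ᵥ A) :
    ∃ g ≠ 0, IsArithProg g A ∧ IsArithProg g B := by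
  obtain ⟨b₀, hb₀⟩ := card_pos.1 (by omega : 0 < #B)
  have hY : (B.erase b₀).Nonempty := card_pos.1 (by rw [card_erase_of_mem hb₀]; omega)
  obtain ⟨a₁, ha₁, hfull₁⟩ : ∃ a₁ ∈ A, ¬ B ⊆ (b₀ - a₁) +ᵥ A := by
    by_contra! hfull
    have := card_le_card (add_subset_vadd_of_forall_subset_sub_vadd hfull)
    rw [card_vadd_finset] at this
    omega
  -- Every `a` with `¬ B ⊆ (b₀ - a) +ᵥ A` has the same translate
  -- `a +ᵥ B.erase b₀ = (A + B) \ (b₀ +ᵥ A)`, so it equals `a₁`.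
  have hfull : ∀ a ∈ A, a ≠ a₁ → B ⊆ (b₀ - a) +ᵥ A := by
    intro a ha hne
    by_contra hnot
    refine hne (eq_of_vadd_finset_eq_of_card_lt hord hY (by rw [card_erase_of_mem hb₀]; omega) ?_)
    rw [vadd_erase_eq_add_sdiff_vadd ha hb₀ hcrit ((hstuck _).resolve_right hnot),
      vadd_erase_eq_add_sdiff_vadd ha₁ hb₀ hcrit ((hstuck _).resolve_right hfull₁)]
  obtain ⟨b₁, hb₁⟩ := hY
  have hd : b₁ - b₀ ≠ 0 := sub_ne_zero.2 (ne_of_mem_erase hb₁)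
  have hunion : A ∪ ((b₁ - b₀) +ᵥ A) ⊆ insert (b₁ - b₀ + a₁) A := by
    refine union_subset (subset_insert _ _) fun x hx => ?_
    obtain ⟨a, ha, rfl⟩ := mem_vadd_finset.1 hx
    obtain rfl | hne := eq_or_ne a a₁
    · exact mem_insert_self _ _
    obtain ⟨a', ha', he⟩ := mem_vadd_finset.1 (hfull a ha hne (mem_of_mem_erase hb₁))
    rw [vadd_eq_add] at he ⊢
    exact mem_insert_of_mem (by convert ha' using 1; rw [← he]; abel)
  have hdord := hord _ hd
  obtain ⟨a', hA'⟩ := isArithProg_of_card_union_vadd_le (card_pos.1 (by omega)) (by omega)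
    ((card_le_card hunion).trans (card_insert_le _ _))
  refine ⟨b₁ - b₀, hd, ⟨a', hA'⟩,
    isArithProg_of_card_add_arithProg_le (a := a') ⟨b₀, hb₀⟩ hA ?_ ?_⟩ <;>
    rw [← hA', add_comm B A] <;> omega

lemma add_addDysonETransform_eq (hord : ∀ x : G, x ≠ 0 → p ≤ addOrderOf x) (e : G)
    (hA : A.Nonempty) (hB : (addDysonETransform e (A, B)).2.Nonempty) (hp : #(A + B) < p)
    (hcrit : #(A + B) + 1 = #A + #B) :
    (addDysonETransform e (A, B)).1 + (addDysonETransform e (A, B)).2 = A + B := by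
  set x := addDysonETransform e (A, B)
  have hsub : x.1 + x.2 ⊆ A + B := addDysonETransform.subset e (A, B)
  have hcard : #x.1 + #x.2 = #A + #B := addDysonETransform.card e (A, B)
  have := card_add_card_le_card_add_add_one (A := x.1) hord (hA.mono subset_union_left) hB
    ((card_le_card hsub).trans_lt hp)
  exact eq_of_subset_of_card_le hsub (by omega)

-- Vosper's theorem, for abelian groups without nonzero elements of order less than `p`.
theorem exists_isArithProg_of_card_add_add_one_eq (hord : ∀ x : G, x ≠ 0 → p ≤ addOrderOf x)
    (hA : 2 ≤ #A) (hB : 2 ≤ #B) (hp : #A + #B + 1 ≤ p) (hcrit : #(A + B) + 1 = #A + #B) :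
    ∃ g ≠ 0, IsArithProg g A ∧ IsArithProg g B := by
  induction hn : #B using Nat.strong_induction_on generalizing A B with
  | _ n ih =>
  subst hn
  by_cases htrans : ∃ e : G, 2 ≤ #(B ∩ (-e +ᵥ A)) ∧ #(B ∩ (-e +ᵥ A)) < #B
  · obtain ⟨e, he, hlt⟩ := htrans
    set A' := (addDysonETransform e (A, B)).1
    set B' := (addDysonETransform e (A, B)).2
    rw [show B ∩ (-e +ᵥ A) = B' from rfl] at he hlt
    have hcard : #A' + #B' = #A + #B := addDysonETransform.card e (A, B)
    have hsum : A' + B' = A + B :=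
      add_addDysonETransform_eq hord e (card_pos.1 (by omega)) (card_pos.1 (by omega : 0 < #B'))
        (by omega) hcrit
    have hA' : #A ≤ #A' := card_le_card subset_union_left
    obtain ⟨g, hg, ⟨a, ha⟩, ⟨b, hb⟩⟩ :=
      ih #B' hlt (A := A') (B := B') (by omega) he (by omega) (by rw [hsum]; omega) rfl
    have hAB : A + B = arithProg (a + b) g (#A + #B - 1) := by
      rw [← hsum, ha, hb, arithProg_add_arithProg (by omega) (by omega), hcard]
    have := hord g hg
    exact ⟨-g, neg_ne_zero.2 hg, isArithProg_of_add_eq_arithProg (card_pos.1 (by omega))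
      (card_pos.1 (by omega)) (by omega) hAB⟩
  · push Not at htrans
    refine exists_isArithProg_of_card_inter_vadd_le_one_or_subset hord hA hB hp hcrit fun e => ?_
    by_contra! h
    have := htrans (-e)
    rw [neg_neg] at this
    exact h.2 (inter_eq_left.1 (eq_of_subset_of_card_le inter_subset_left (this (by omega))))

end CriticalPair

lemma le_addOrderOf_of_forall_prime_dvd_card {G : Type*} [AddGroup G] [Fintype G] {n p : ℕ}
    (hn : Fintype.card G = n) (hpmin : ∀ q : ℕ, q.Prime → q ∣ n → p ≤ q) (x : G) (hx : x ≠ 0) :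
    p ≤ addOrderOf x := by
  have h1 : addOrderOf x ≠ 1 := fun h => hx (AddMonoid.addOrderOf_eq_one_iff.1 h)
  have hdvd : (addOrderOf x).minFac ∣ n := (Nat.minFac_dvd _).trans (hn ▸ addOrderOf_dvd_card)
  exact (hpmin _ (Nat.minFac_prime h1) hdvd).trans (Nat.minFac_le (addOrderOf_pos x))

section Sumset

variable {G : Type*} [AddCommGroup G] [DecidableEq G]

lemma foldSum_eq_nsmul (h : ℕ) (A : Finset G) : foldSum h A = h • A := by
  ext x
  rw [← mem_coe (s := h • A), coe_nsmul, Set.mem_nsmul_iff_sum]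
  simp [foldSum]

lemma card_add_self_add_le_card_nsmul {p : ℕ} (hord : ∀ x : G, x ≠ 0 → p ≤ addOrderOf x)
    {A : Finset G} (hA : A.Nonempty) :
    ∀ j, #((j + 2) • A) < p → #(A + A) + j * (#A - 1) ≤ #((j + 2) • A)
  | 0, _ => by rw [zero_mul, add_zero, two_nsmul]
  | j + 1, hp => by
    rw [show j + 1 + 2 = j + 2 + 1 from rfl, succ_nsmul] at hp ⊢
    have hle := card_le_card_add_right (s := (j + 2) • A) hA
    have := card_add_self_add_le_card_nsmul hord hA j (hle.trans_lt hp)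
    have := card_add_card_le_card_add_add_one hord hA.nsmul hA hp
    rw [Nat.succ_mul]
    omega

lemma exists_isArithProg_of_card_nsmul_eq {p h : ℕ} (hord : ∀ x : G, x ≠ 0 → p ≤ addOrderOf x)
    (hp : p.Prime) (hh : 2 ≤ h) {A : Finset G} (hA : 2 ≤ #A)
    (hcard : #(h • A) = h * (#A - 1) + 1) (hlt : #(h • A) < p) :
    ∃ g, IsArithProg g A := by
  have hAA := card_add_self_add_le_card_nsmul hord (A := A) (card_pos.1 (by omega)) (h - 2)
    (by rwa [Nat.sub_add_cancel hh])
  rw [Nat.sub_add_cancel hh, hcard] at hAA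
  have hsplit : h * (#A - 1) = (h - 2) * (#A - 1) + 2 * (#A - 1) := by
    rw [← add_mul, Nat.sub_add_cancel hh]
  have hcrit := card_add_card_le_card_add_add_one hord (A := A) (B := A)
    (card_pos.1 (by omega)) (card_pos.1 (by omega)) (by omega)
  have hp2 : p ≠ 2 * #A := fun h2 => by
    have := hp.eq_one_or_self_of_dvd 2 ⟨#A, h2⟩
    omega
  obtain ⟨g, -, hgA, -⟩ := exists_isArithProg_of_card_add_add_one_eq hord (A := A) (B := A)
    hA hA (by omega) (by omega)
  exact ⟨g, hgA⟩

lemma card_nsmul_arithProg {p h k : ℕ} {a g : G}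
    (hord : ∀ x : G, x ≠ 0 → p ≤ addOrderOf x) (hk : k ≠ 0) (hcard : #(arithProg a g k) = k)
    (hlt : h * (k - 1) + 1 < p) : #(h • arithProg a g k) = h * (k - 1) + 1 := by
  rw [nsmul_arithProg hk]
  obtain rfl | hk1 := eq_or_ne k 1
  · rw [Nat.sub_self, mul_zero, arithProg_one, card_singleton]
  have hg : g ≠ 0 := by
    rintro rfl
    rw [arithProg_zero_right hk, card_singleton] at hcard
    omega
  exact card_arithProg (hlt.le.trans (hord g hg))

end Sumset

theorem stmt1_general (G : Type*) [AddCommGroup G] [Fintype G] [DecidableEq G]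
    (n m h p : ℕ) (hn : Fintype.card G = n)
    (hp : p.Prime) (hpmin : ∀ q : ℕ, q.Prime → q ∣ n → p ≤ q)
    (hh : 2 ≤ h) (hm : 1 ≤ m) (hineq : h * m - h + 1 < p)
    (A : Finset G) (hA : A.card = m) :
    (foldSum h A).card = h * m - h + 1 ↔
      ∃ a g : G, A = (Finset.range m).image fun i => a + i • g := by
  have hord := le_addOrderOf_of_forall_prime_dvd_card hn hpmin
  rw [← Nat.mul_sub_one] at hineq ⊢
  rw [foldSum_eq_nsmul]
  constructor
  · intro hcard
    obtain rfl | hm2 := hm.eq_or_lt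
    · obtain ⟨a, rfl⟩ := card_eq_one.1 hA
      exact ⟨a, 0, arithProg_one.symm⟩
    subst hA
    obtain ⟨g, a, ha⟩ := exists_isArithProg_of_card_nsmul_eq hord hp hh hm2 hcard (hcard ▸ hineq)
    exact ⟨a, g, ha⟩
  · rintro ⟨a, g, rfl⟩
    exact card_nsmul_arithProg hord (by omega) hA hineq

theorem stmt1 (G : Type*) [AddCommGroup G] [Fintype G] [DecidableEq G]
    (n m h p : ℕ) (hn : Fintype.card G = n)
    (hp : p.Prime) (hpn : p ∣ n) (hpmin : ∀ q : ℕ, q.Prime → q ∣ n → p ≤ q)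
    (hh : 2 ≤ h) (hm : 1 ≤ m) (hineq : h * m - h + 1 < p)
    (A : Finset G) (hA : A.card = m) :
    (foldSum h A).card = h * m - h + 1 ↔
      ∃ a g : G, A = (Finset.range m).image fun i => a + i • g :=
  stmt1_general G n m h p hn hp hpmin hh hm hineq A hA
end

section
/- For every integer h ≥ 3 and every positive integer C, there exist a finite abelian group G and an integer m with h + 2 ≤ m ≤ |G| such that ρ(G,m,h) − ρ̂(G,m,h) ≥ C. -/
/-- `ρ(G,m,h)`: the minimum size of the `h`-fold sumset over all `m`-subsets of `G`. -/
noncomputable def rho (G : Type*) [AddCommGroup G] [DecidableEq G] (m h : ℕ) : ℕ :=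
  sInf {k | ∃ A : Finset G, A.card = m ∧ (foldSum h A).card = k}

/-- The `h`-fold restricted sumset of a finite subset `A` of an abelian group:
all sums of `h` pairwise distinct elements of `A`. -/
def restSum {G : Type*} [AddCommGroup G] [DecidableEq G] (h : ℕ) (A : Finset G) : Finset G :=
  (A.powersetCard h).image fun B => ∑ x ∈ B, x

/-- `ρ̂(G,m,h)`: the minimum size of the `h`-fold restricted sumset over all
`m`-subsets of `G`. -/
noncomputable def rhoHat (G : Type*) [AddCommGroup G] [DecidableEq G] (m h : ℕ) : ℕ :=
  sInf {k | ∃ A : Finset G, A.card = m ∧ (restSum h A).card = k}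

/-! In `G = ZMod 3 × ZMod q` with `q` prime and `m = q + 1`, the set `{0} × ZMod q ∪ {(1, 0)}`
has all its restricted `h`-fold sums in `{0, 1} × ZMod q`, so `ρ̂ ≤ 2q`. Any `(q + 1)`-set `A`
has fibres `Fα, Fβ` over distinct `α, β ∈ ZMod 3` with `3|Fα| ≥ q + 1` and
`|Fα| + 2|Fβ| ≥ q + 1` (the largest and second largest). The sumset `h • A` contains
`(h - j) • Fα + j • Fβ` in the coset above `(h - j)α + jβ` for `j = 0, 1, 2`; these three cosets
are distinct, and by Cauchy–Davenport each part has at least `q - 1` elements, so `ρ ≥ 3q - 3`.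
A prime `q ≥ C + h + 3` then gives the gap. -/

open Finset Pointwise

section Sumsets

variable {G : Type*} [AddCommGroup G] [DecidableEq G]

lemma le_rho [Fintype G] {m h k : ℕ} (hm : m ≤ Fintype.card G)
    (hk : ∀ A : Finset G, #A = m → k ≤ #(h • A)) : k ≤ rho G m h := by
  obtain ⟨A, -, hA⟩ := exists_subset_card_eq (s := (univ : Finset G)) (by simpa using hm)
  refine le_csInf ⟨_, A, hA, rfl⟩ ?_
  rintro _ ⟨B, hB, rfl⟩
  simpa [foldSum_eq_nsmul] using hk B hB

lemma rhoHat_le_card_restSum {m : ℕ} (h : ℕ) {A : Finset G} (hA : #A = m) :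
    rhoHat G m h ≤ #(restSum h A) :=
  Nat.sInf_le ⟨A, hA, rfl⟩

end Sumsets

section Fiber

variable {G H : Type*}

noncomputable def fiber (A : Finset (G × H)) (a : G) : Finset H :=
  A.preimage (Prod.mk a) (Prod.mk_right_injective a).injOn

@[simp]
lemma mem_fiber {A : Finset (G × H)} {a : G} {y : H} : y ∈ fiber A a ↔ (a, y) ∈ A :=
  mem_preimage

lemma singleton_product_fiber_subset (A : Finset (G × H)) (a : G) : {a} ×ˢ fiber A a ⊆ A := by
  rintro ⟨x, y⟩ hxy
  simp only [mem_product, mem_singleton, mem_fiber] at hxy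
  obtain ⟨rfl, hy⟩ := hxy
  exact hy

lemma card_eq_sum_card_fiber [Fintype G] [DecidableEq G] (A : Finset (G × H)) :
    #A = ∑ a, #(fiber A a) := by
  rw [card_eq_sum_card_fiberwise (f := Prod.fst) (t := univ) (fun x _ => mem_coe.2 (mem_univ x.1))]
  refine sum_congr rfl fun a _ =>
    card_nbij' Prod.snd (Prod.mk a) ?_ (fun y hy => by simpa using hy) ?_ fun _ _ => rfl
  · rintro ⟨x, y⟩ hxy
    obtain ⟨hxy, rfl⟩ := mem_filter.1 hxy
    simpa using hxy
  · rintro ⟨x, y⟩ hxy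
    simp_all

lemma nsmul_fiber_add_nsmul_fiber_subset [AddCommGroup G] [AddCommGroup H] [DecidableEq G]
    [DecidableEq H] (A : Finset (G × H)) (a b : G) (i j : ℕ) :
    i • fiber A a + j • fiber A b ⊆ fiber ((i + j) • A) (i • a + j • b) := by
  intro y hy
  rw [mem_fiber, add_nsmul]
  have : ({i • a + j • b} : Finset G) ×ˢ (i • fiber A a + j • fiber A b) ⊆ i • A + j • A := by
    rw [← singleton_add_singleton, ← product_add_product_comm, ← nsmul_singleton,
      ← nsmul_singleton, ← product_nsmul, ← product_nsmul]
    exact add_subset_add (nsmul_subset_nsmul_left (singleton_product_fiber_subset A a))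
      (nsmul_subset_nsmul_left (singleton_product_fiber_subset A b))
  exact this (mem_product.2 ⟨mem_singleton_self _, hy⟩)

end Fiber

lemma ZMod.min_le_card_nsmul {p : ℕ} (hp : p.Prime) {s : Finset (ZMod p)} (hs : s.Nonempty)
    (n : ℕ) : min p (n * (#s - 1) + 1) ≤ #(n • s) := by
  induction n with
  | zero => simp
  | succ n ih =>
    have hcd := ZMod.cauchy_davenport hp hs (hs.nsmul (n := n))
    have hs₁ : 1 ≤ #s := hs.card_pos
    rw [succ_nsmul', add_one_mul]
    omega

lemma ZMod.min_le_card_nsmul_add_nsmul {p : ℕ} (hp : p.Prime) {s t : Finset (ZMod p)}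
    (hs : s.Nonempty) (ht : t.Nonempty) (i j : ℕ) :
    min p (i * (#s - 1) + j * (#t - 1) + 1) ≤ #(i • s + j • t) := by
  have hcd := ZMod.cauchy_davenport hp (hs.nsmul (n := i)) (ht.nsmul (n := j))
  have hi := ZMod.min_le_card_nsmul hp hs i
  have hj := ZMod.min_le_card_nsmul hp ht j
  omega

lemma ZMod.exists_ne_sum_le (n : ZMod 3 → ℕ) :
    ∃ α β : ZMod 3, α ≠ β ∧ ∑ c, n c ≤ 3 * n α ∧ ∑ c, n c ≤ n α + 2 * n β := by
  rw [show ∑ c, n c = n 0 + n 1 + n 2 from Fin.sum_univ_three n]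
  rcases le_total (n 0) (n 1) with h01 | h01 <;>
  rcases le_total (n 1) (n 2) with h12 | h12 <;>
  rcases le_total (n 0) (n 2) with h02 | h02 <;>
  first
    | exact ⟨0, 1, by decide, by omega, by omega⟩
    | exact ⟨0, 2, by decide, by omega, by omega⟩
    | exact ⟨1, 0, by decide, by omega, by omega⟩
    | exact ⟨1, 2, by decide, by omega, by omega⟩
    | exact ⟨2, 0, by decide, by omega, by omega⟩
    | exact ⟨2, 1, by decide, by omega, by omega⟩

lemma ZMod.nsmul_add_nsmul_ne {α β : ZMod 3} (hαβ : α ≠ β) (k : ℕ) :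
    (k + 2) • α + 0 • β ≠ (k + 1) • α + 1 • β ∧ (k + 2) • α + 0 • β ≠ k • α + 2 • β ∧
      (k + 1) • α + 1 • β ≠ k • α + 2 • β := by
  simp only [nsmul_eq_mul, Nat.cast_add, Nat.cast_ofNat, Nat.cast_one, Nat.cast_zero]
  generalize (k : ZMod 3) = κ
  revert κ α β
  decide

lemma add_add_le_sum_univ {ι : Type*} [Fintype ι] [DecidableEq ι] (f : ι → ℕ) {x y z : ι}
    (hxy : x ≠ y) (hxz : x ≠ z) (hyz : y ≠ z) : f x + f y + f z ≤ ∑ i, f i := by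
  have hsub := sum_le_univ_sum_of_nonneg (f := f) (s := {x, y, z}) fun _ => Nat.zero_le _
  rwa [sum_insert (by simp [hxy, hxz]), sum_pair hyz, ← add_assoc] at hsub

lemma three_mul_le_card_nsmul_add_three {q : ℕ} (hq : q.Prime) {h : ℕ} (hh : 3 ≤ h)
    {A : Finset (ZMod 3 × ZMod q)} (hA : #A = q + 1) : 3 * q ≤ #(h • A) + 3 := by
  have : NeZero q := ⟨hq.ne_zero⟩
  obtain ⟨k, rfl⟩ : ∃ k, h = k + 2 := ⟨h - 2, by omega⟩
  have hsum : ∑ c, #(fiber A c) = q + 1 := (card_eq_sum_card_fiber A).symm.trans hA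
  obtain ⟨α, β, hαβ, hα, hβ⟩ := ZMod.exists_ne_sum_le fun c => #(fiber A c)
  rw [hsum] at hα hβ
  have hle : ∀ c, #(fiber A c) ≤ q := fun c => (card_le_univ _).trans (ZMod.card q).le
  have hFα : (fiber A α).Nonempty := card_pos.1 (by have := hle β; omega)
  have hFβ : (fiber A β).Nonempty := card_pos.1 (by have := hle α; omega)
  set a := #(fiber A α)
  set b := #(fiber A β)
  have hcoset : ∀ i j, i + j = k + 2 →
      min q (i * (a - 1) + j * (b - 1) + 1) ≤
        #(fiber ((k + 2) • A) (i • α + j • β)) := by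
    rintro i j hij
    rw [← hij]
    exact (ZMod.min_le_card_nsmul_add_nsmul hq hFα hFβ i j).trans
      (card_le_card (nsmul_fiber_add_nsmul_fiber_subset A α β i j))
  have h₀ := hcoset (k + 2) 0 rfl
  have h₁ := hcoset (k + 1) 1 (by omega)
  have h₂ := hcoset k 2 rfl
  obtain ⟨h₀₁, h₀₂, h₁₂⟩ := ZMod.nsmul_add_nsmul_ne hαβ k
  have hcard := add_add_le_sum_univ (fun c => #(fiber ((k + 2) • A) c)) h₀₁ h₀₂ h₁₂
  rw [← card_eq_sum_card_fiber] at hcard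
  have m₀ : 3 * (a - 1) ≤ (k + 2) * (a - 1) := Nat.mul_le_mul_right _ (by omega)
  have m₁ : 2 * (a - 1) ≤ (k + 1) * (a - 1) := Nat.mul_le_mul_right _ (by omega)
  have m₂ : 1 * (a - 1) ≤ k * (a - 1) := Nat.mul_le_mul_right _ (by omega)
  omega

lemma fst_sum_eq_zero_or_of_subset_insert {G H : Type*} [AddCommGroup G] [AddCommGroup H]
    [DecidableEq G] [DecidableEq H] {x : G × H} {S B : Finset (G × H)}
    (hS : ∀ y ∈ S, y.1 = 0) (hB : B ⊆ insert x S) :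
    (∑ y ∈ B, y).1 = 0 ∨ (∑ y ∈ B, y).1 = x.1 := by
  have hrest : ∀ y ∈ B.erase x, y.1 = 0 := fun y hy =>
    hS y ((mem_insert.1 (hB (mem_of_mem_erase hy))).resolve_left (ne_of_mem_erase hy))
  rw [Prod.fst_sum]
  by_cases hx : x ∈ B
  · right
    rw [← add_sum_erase B _ hx, sum_eq_zero hrest, add_zero]
  · left
    exact sum_eq_zero fun y hy => hrest y (mem_erase.2 ⟨ne_of_mem_of_not_mem hy hx, hy⟩)

lemma rhoHat_prod_le {G H : Type*} [AddCommGroup G] [AddCommGroup H] [DecidableEq G]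
    [DecidableEq H] [Fintype H] {g : G} (hg : g ≠ 0) (h : ℕ) :
    rhoHat (G × H) (Fintype.card H + 1) h ≤ 2 * Fintype.card H := by
  set S : Finset (G × H) := {0} ×ˢ univ
  have hgS : (g, (0 : H)) ∉ S := by simp [S, hg.symm]
  have hcard : #(insert (g, 0) S) = Fintype.card H + 1 := by
    rw [card_insert_of_notMem hgS]
    simp [S]
  have hsub : restSum h (insert (g, 0) S) ⊆ {0, g} ×ˢ univ := by
    simp only [restSum, image_subset_iff, mem_powersetCard]
    rintro B ⟨hB, -⟩
    have hS : ∀ y ∈ S, y.1 = 0 := by simp [S]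
    simpa using fst_sum_eq_zero_or_of_subset_insert hS hB
  calc rhoHat (G × H) (Fintype.card H + 1) h ≤ #(restSum h (insert (g, 0) S)) :=
        rhoHat_le_card_restSum h hcard
    _ ≤ #(({0, g} : Finset G) ×ˢ (univ : Finset H)) := card_le_card hsub
    _ = 2 * Fintype.card H := by simp [card_pair hg.symm]

theorem stmt5_general (h C : ℕ) (hh : 3 ≤ h) :
    ∃ (G : Type) (iA : AddCommGroup G) (iF : Fintype G) (iD : DecidableEq G) (m : ℕ),
      h + 2 ≤ m ∧ m ≤ @Fintype.card G iF ∧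
        @rhoHat G iA iD m h + C ≤ @rho G iA iD m h := by
  obtain ⟨q, hqC, hq⟩ := Nat.exists_infinite_primes (C + h + 3)
  have : NeZero q := ⟨hq.ne_zero⟩
  have hcard : q + 1 ≤ Fintype.card (ZMod 3 × ZMod q) := by
    simp only [Fintype.card_prod, ZMod.card]
    omega
  refine ⟨ZMod 3 × ZMod q, inferInstance, inferInstance, inferInstance, q + 1, by omega, hcard, ?_⟩
  have hupper := rhoHat_prod_le (G := ZMod 3) (H := ZMod q) one_ne_zero h
  have hlower := le_rho hcard fun A hA =>
    Nat.sub_le_of_le_add (three_mul_le_card_nsmul_add_three hq hh hA)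
  rw [ZMod.card] at hupper
  omega

theorem stmt5 (h C : ℕ) (hh : 3 ≤ h) (hC : 1 ≤ C) :
    ∃ (G : Type) (iA : AddCommGroup G) (iF : Fintype G) (iD : DecidableEq G) (m : ℕ),
      h + 2 ≤ m ∧ m ≤ @Fintype.card G iF ∧
        @rhoHat G iA iD m h + C ≤ @rho G iA iD m h :=
  stmt5_general h C hh
end

section
/- Let G be a finite abelian group of order n and type (n₁,…,n_r), i.e., G ≅ ℤ/n₁ℤ × ⋯ × ℤ/n_rℤ with 2 ≤ n₁ | n₂ | ⋯ | n_r. For every integer m with 1 ≤ m ≤ n and every integer h ≥ 1, the minimum size of the h-fold signed sumset satisfies ρ±(G,m,h) ≤ u±(G,m,h). -/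
/-- The `h`-fold signed sumset of a finite subset `A = {a₁,…,a_m}` of an abelian group:
all sums `λ₁a₁ + ⋯ + λ_m a_m` with integer coefficients satisfying `|λ₁| + ⋯ + |λ_m| = h`. -/
def sgnSum {G : Type*} [AddCommGroup G] (h : ℕ) (A : Finset G) : Set G :=
  {x | ∃ c : G → ℤ, (∑ a ∈ A, (c a).natAbs) = h ∧ (∑ a ∈ A, c a • a) = x}

/-- `ρ±(G,m,h)`: the minimum size of the `h`-fold signed sumset over all `m`-subsets of `G`. -/
noncomputable def rhoPM (G : Type*) [AddCommGroup G] (m h : ℕ) : ℕ :=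
  sInf {k | ∃ A : Finset G, A.card = m ∧ (sgnSum h A).ncard = k}

/-- `f_d(m,h) = (h⌈m/d⌉ - h + 1)·d`. -/
def fDiv (m h d : ℕ) : ℕ := (h * ((m + d - 1) / d) - h + 1) * d

/-!
Write `d = ∏ eᵢ` with `eᵢ ∣ nᵢ` and put `qᵢ = nᵢ / eᵢ`. Reduction modulo the `qᵢ` is a surjection
`π : G → ∏ ℤ/qᵢ` with kernel of order `d`, and `c = ⌈m/d⌉ ≤ q_r`. In the last factor `ℤ/q_r` choose
a `c`-set `X` whose signed sums of weight `≤ h` and parity `h` take at most `h(c-1)+1` values: any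
`c`-set if `q_r ≤ h(c-1)+1`, a symmetric set if `h = 1`, and otherwise the progression
`-(c-1), -(c-3), …, c-1`, whose such sums lie in the progression of step 2 from `-h(c-1)` to
`h(c-1)`. Any `m` elements `A` of `π⁻¹(X)` then satisfy `π(h±A) ⊆` those sums of `X`, so
`|h±A| ≤ (h(c-1)+1)·d = f_d(m,h)`.
-/

open Finset

/-- Collecting coefficients along the fibres of a homomorphism can only lower `∑ |λᵢ|`, and by an
even amount; this is the set that survives that operation. -/
def sgnSumUpTo {G : Type*} [AddCommGroup G] (h : ℕ) (A : Finset G) : Set G :=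
  {x | ∃ c : G → ℤ, ∑ a ∈ A, (c a).natAbs ≤ h ∧ ∑ a ∈ A, c a ≡ h [ZMOD 2] ∧
    ∑ a ∈ A, c a • a = x}

section SignedSums

variable {G Q : Type*} [AddCommGroup G] [AddCommGroup Q] {h : ℕ}

theorem sgnSum_subset_sgnSumUpTo (A : Finset G) : sgnSum h A ⊆ sgnSumUpTo h A := by
  rintro _ ⟨c, hc, rfl⟩
  refine ⟨c, hc.le, ?_, rfl⟩
  calc ∑ a ∈ A, c a ≡ ∑ a ∈ A, ((c a).natAbs : ℤ) [ZMOD 2] :=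
        Int.ModEq.sum fun a _ => by unfold Int.ModEq; omega
    _ = h := by exact_mod_cast hc

theorem map_mem_sgnSumUpTo [DecidableEq Q] (π : G →+ Q) {A : Finset G} {X : Finset Q}
    (hAX : ∀ a ∈ A, π a ∈ X) {x : G} (hx : x ∈ sgnSumUpTo h A) : π x ∈ sgnSumUpTo h X := by
  obtain ⟨c, hc, hpar, rfl⟩ := hx
  refine ⟨fun y => ∑ a ∈ A with π a = y, c a, ?_, ?_, ?_⟩
  · calc ∑ y ∈ X, (∑ a ∈ A with π a = y, c a).natAbs
        ≤ ∑ y ∈ X, ∑ a ∈ A with π a = y, (c a).natAbs :=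
          sum_le_sum fun y _ => Int.natAbs_sum_le _ _
      _ = ∑ a ∈ A, (c a).natAbs := sum_fiberwise_of_maps_to hAX _
      _ ≤ h := hc
  · rwa [sum_fiberwise_of_maps_to hAX]
  · rw [map_sum, ← sum_fiberwise_of_maps_to hAX]
    refine sum_congr rfl fun y _ => ?_
    rw [sum_smul]
    exact sum_congr rfl fun a ha => by rw [map_zsmul, (mem_filter.1 ha).2]

theorem sgnSumUpTo_image_subset [DecidableEq Q] (π : G →+ Q) {A : Finset G}
    (hπ : Set.InjOn π A) : sgnSumUpTo h (A.image π) ⊆ π '' sgnSumUpTo h A := by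
  rintro _ ⟨w, hw, hpar, rfl⟩
  rw [sum_image hπ] at hw hpar ⊢
  exact ⟨_, ⟨w ∘ π, hw, hpar, rfl⟩, by simp [map_zsmul]⟩

theorem ncard_sgnSumUpTo_image_le [Finite G] [DecidableEq Q] (π : G →+ Q) {A : Finset G}
    (hπ : Set.InjOn π A) : (sgnSumUpTo h (A.image π)).ncard ≤ (sgnSumUpTo h A).ncard :=
  (Set.ncard_le_ncard (sgnSumUpTo_image_subset π hπ) ((Set.toFinite _).image _)).trans
    (Set.ncard_image_le (Set.toFinite _))

theorem sgnSumUpTo_one_subset {X : Finset G} (hX : ∀ x ∈ X, -x ∈ X) : sgnSumUpTo 1 X ⊆ X := by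
  classical
  rintro _ ⟨w, hw, hpar, rfl⟩
  obtain ⟨a, ha, hwa⟩ : ∃ a ∈ X, w a ≠ 0 :=
    exists_ne_zero_of_sum_ne_zero fun h0 => by rw [h0] at hpar; exact absurd hpar (by decide)
  have hle : (w a).natAbs + ∑ b ∈ X.erase a, (w b).natAbs ≤ 1 := by
    rwa [add_sum_erase X (fun b => (w b).natAbs) ha]
  have hrest : ∀ b ∈ X, b ≠ a → w b = 0 := fun b hb hba => by
    have := (sum_eq_zero_iff.1 (by omega : ∑ b ∈ X.erase a, (w b).natAbs = 0)) b
      (mem_erase.2 ⟨hba, hb⟩)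
    omega
  rw [sum_eq_single_of_mem a ha fun b hb hba => by rw [hrest b hb hba, zero_smul]]
  rcases Int.natAbs_eq_iff.1 (show (w a).natAbs = 1 by omega) with h1 | h1 <;>
    simp [h1, ha, hX]

end SignedSums

theorem AddMonoidHom.ncard_preimage_of_surjective {G Q : Type*} [AddCommGroup G] [Finite G]
    [AddCommGroup Q] {π : G →+ Q} (hπ : Function.Surjective π) (S : Finset Q) :
    (π ⁻¹' S).ncard = #S * Nat.card π.ker := by
  classical
  have := Fintype.ofFinite G
  have hfiber : ∀ s ∈ S, #{x | π x ∈ S ∧ π x = s} = Nat.card π.ker := fun s hs => by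
    rw [← Nat.card_congr (π.fiberEquivKerOfSurjective hπ s), ← Set.ncard_coe_finset,
      ← Nat.card_coe_set_eq]
    congr
    ext x
    simp only [coe_filter, mem_univ, true_and, Set.mem_ofPred_eq]
    grind
  have hpre : π ⁻¹' S = ↑({x | π x ∈ S} : Finset G) := by ext; simp
  rw [hpre, Set.ncard_coe_finset, card_eq_sum_card_fiberwise (f := π) (t := S)
    (by intro x hx; simpa using hx), sum_congr rfl (by simpa only [filter_filter] using hfiber),
    sum_const, smul_eq_mul]

theorem rhoPM_le_of_surjective {G Q : Type*} [AddCommGroup G] [Finite G] [AddCommGroup Q]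
    {π : G →+ Q} (hπ : Function.Surjective π) (X : Finset Q) {m h : ℕ}
    (hm : m ≤ #X * Nat.card π.ker) :
    rhoPM G m h ≤ (sgnSumUpTo h X).ncard * Nat.card π.ker := by
  classical
  have : Finite Q := Finite.of_surjective π hπ
  have hP := Set.toFinite (π ⁻¹' X)
  obtain ⟨A, hAX, hAm⟩ := exists_subset_card_eq (s := hP.toFinset) (n := m)
    (by rwa [← Set.ncard_eq_toFinset_card _ hP, π.ncard_preimage_of_surjective hπ])
  have hsub : sgnSum h A ⊆ π ⁻¹' sgnSumUpTo h X := fun x hx =>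
    map_mem_sgnSumUpTo π (fun a ha => by simpa using hAX ha) (sgnSum_subset_sgnSumUpTo A hx)
  calc rhoPM G m h ≤ (sgnSum h A).ncard := Nat.sInf_le ⟨A, hAm, rfl⟩
    _ ≤ (π ⁻¹' sgnSumUpTo h X).ncard := Set.ncard_le_ncard hsub (Set.toFinite _)
    _ = (sgnSumUpTo h X).ncard * Nat.card π.ker := by
      have hY := Set.toFinite (sgnSumUpTo h X)
      rw [← hY.coe_toFinset, π.ncard_preimage_of_surjective hπ, Set.ncard_coe_finset]

theorem ZMod.intCast_injOn_of_two_mul_abs_lt {q : ℕ} {S : Set ℤ} (hS : ∀ z ∈ S, 2 * |z| < q) :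
    S.InjOn (Int.cast : ℤ → ZMod q) := fun a ha b hb hab => by
  have hdvd : (q : ℤ) ∣ b - a := (ZMod.intCast_eq_intCast_iff_dvd_sub a b q).1 hab
  have hlt : |b - a| < q := by
    linarith [abs_sub b a, hS a ha, hS b hb, abs_nonneg a, abs_nonneg b]
  linarith [Int.eq_zero_of_abs_lt_dvd hdvd hlt]

theorem ZMod.exists_card_eq_forall_neg_mem {q c : ℕ} (hcq : c < q) :
    ∃ X : Finset (ZMod q), #X = c ∧ ∀ x ∈ X, -x ∈ X := by
  classical
  set k := c / 2
  set I : Finset (ZMod q) := (Icc (-(k : ℤ)) k).image Int.cast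
  have hI : #I = 2 * k + 1 := by
    rw [card_image_of_injOn, Int.card_Icc]
    · omega
    refine ZMod.intCast_injOn_of_two_mul_abs_lt fun z hz => ?_
    rw [coe_Icc, Set.mem_Icc] at hz
    have : |z| ≤ k := abs_le.2 hz
    omega
  have hIneg : ∀ x ∈ I, -x ∈ I := by
    simp only [I, mem_image, mem_Icc]
    rintro _ ⟨z, hz, rfl⟩
    exact ⟨-z, ⟨by omega, by omega⟩, by push_cast; rfl⟩
  rcases Nat.even_or_odd' c with ⟨k', hk' | hk'⟩
  · have h0 : (0 : ZMod q) ∈ I := mem_image.2 ⟨0, by simp, Int.cast_zero⟩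
    refine ⟨I.erase 0, by rw [card_erase_of_mem h0, hI]; omega, fun x hx => ?_⟩
    exact mem_erase.2 ⟨neg_ne_zero.2 (ne_of_mem_erase hx), hIneg x (mem_of_mem_erase hx)⟩
  · exact ⟨I, by omega, hIneg⟩

theorem Int.sgnSumUpTo_subset {h R : ℕ} {X : Finset ℤ}
    (hX : ∀ z ∈ X, |z| ≤ R ∧ z ≡ R [ZMOD 2]) :
    sgnSumUpTo h X ⊆ (Finset.range (h * R + 1)).image fun j : ℕ => 2 * (j : ℤ) - (h * R : ℕ) := by
  rintro _ ⟨w, hw, hpar, rfl⟩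
  simp only [smul_eq_mul]
  set s := ∑ z ∈ X, w z * z
  have habs : |s| ≤ h * R :=
    calc |s| ≤ ∑ z ∈ X, |w z * z| := abs_sum_le_sum_abs _ _
      _ ≤ ∑ z ∈ X, ((w z).natAbs : ℤ) * R := sum_le_sum fun z hz => by
          rw [abs_mul, Int.abs_eq_natAbs]
          exact mul_le_mul_of_nonneg_left (hX z hz).1 (by positivity)
      _ = (∑ z ∈ X, (w z).natAbs : ℕ) * R := by push_cast; rw [sum_mul]
      _ ≤ h * R := by gcongr
  have hmod : s ≡ h * R [ZMOD 2] :=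
    calc s ≡ ∑ z ∈ X, w z * R [ZMOD 2] := Int.ModEq.sum fun z hz => (hX z hz).2.mul_left _
      _ = (∑ z ∈ X, w z) * R := sum_mul ..|>.symm
      _ ≡ h * R [ZMOD 2] := hpar.mul_right _
  have := abs_le.1 habs
  unfold Int.ModEq at hmod
  simp only [coe_image, coe_range, Set.mem_image, Set.mem_Iio]
  exact ⟨((s + h * R) / 2).toNat, by omega, by omega⟩

theorem ZMod.exists_card_eq_ncard_sgnSumUpTo_le_of_two_mul_lt {q c : ℕ} (h : ℕ)
    (hcq : 2 * (c - 1) < q) :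
    ∃ X : Finset (ZMod q), #X = c ∧ (sgnSumUpTo h X).ncard ≤ h * (c - 1) + 1 := by
  classical
  have : NeZero q := ⟨by omega⟩
  set XZ : Finset ℤ := (range c).image fun j : ℕ => 2 * (j : ℤ) - (c - 1 : ℕ)
  have hXZ : ∀ z ∈ XZ, |z| ≤ (c - 1 : ℕ) ∧ z ≡ (c - 1 : ℕ) [ZMOD 2] := by
    simp only [XZ, mem_image, mem_range]
    rintro _ ⟨j, hj, rfl⟩
    refine ⟨abs_le.2 ⟨by omega, by omega⟩, ?_⟩
    unfold Int.ModEq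
    omega
  have hinj : Set.InjOn (Int.castAddHom (ZMod q)) XZ := by
    refine ZMod.intCast_injOn_of_two_mul_abs_lt fun z hz => ?_
    have := (hXZ z hz).1
    omega
  refine ⟨XZ.image (Int.castAddHom (ZMod q)), ?_, ?_⟩
  · rw [card_image_of_injOn hinj, card_image_of_injective _ fun a b hab => by simp at hab; omega,
      card_range]
  · set YZ : Finset ℤ :=
      (range (h * (c - 1) + 1)).image fun j : ℕ => 2 * (j : ℤ) - (h * (c - 1) : ℕ)
    have hsub : sgnSumUpTo h (XZ.image (Int.castAddHom (ZMod q))) ⊆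
        ↑(YZ.image (Int.castAddHom (ZMod q))) := by
      rw [coe_image]
      exact (sgnSumUpTo_image_subset _ hinj).trans (Set.image_mono (Int.sgnSumUpTo_subset hXZ))
    calc _ ≤ #(YZ.image (Int.castAddHom (ZMod q))) := by
          rw [← Set.ncard_coe_finset]; exact Set.ncard_le_ncard hsub (finite_toSet _)
      _ ≤ #YZ := card_image_le
      _ ≤ h * (c - 1) + 1 := card_image_le.trans (card_range _).le

theorem ZMod.exists_card_eq_ncard_sgnSumUpTo_le {q c h : ℕ} (hc : 1 ≤ c) (hcq : c ≤ q)
    (hh : 1 ≤ h) :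
    ∃ X : Finset (ZMod q), #X = c ∧ (sgnSumUpTo h X).ncard ≤ h * (c - 1) + 1 := by
  have : NeZero q := ⟨by omega⟩
  by_cases hq : q ≤ h * (c - 1) + 1
  · obtain ⟨X, -, hX⟩ := exists_subset_card_eq (s := (univ : Finset (ZMod q))) (n := c)
      (by rwa [card_univ, ZMod.card])
    exact ⟨X, hX, (Set.ncard_le_card _).trans (by rwa [Nat.card_zmod])⟩
  obtain rfl | hh2 : h = 1 ∨ 2 ≤ h := by omega
  · obtain ⟨X, hX, hneg⟩ := ZMod.exists_card_eq_forall_neg_mem (by omega : c < q)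
    refine ⟨X, hX, ?_⟩
    calc _ ≤ (X : Set (ZMod q)).ncard := Set.ncard_le_ncard (sgnSumUpTo_one_subset hneg)
      _ = 1 * (c - 1) + 1 := by rw [Set.ncard_coe_finset]; omega
  · have := Nat.mul_le_mul_right (c - 1) hh2
    exact ZMod.exists_card_eq_ncard_sgnSumUpTo_le_of_two_mul_lt h (by omega)

theorem fDiv_eq (m h d : ℕ) : fDiv m h d = (h * (m ⌈/⌉ d - 1) + 1) * d := by
  rw [fDiv, Nat.ceilDiv_eq_add_pred_div, Nat.mul_sub_one]

theorem AddMonoidHom.card_ker_mul_card_of_surjective {G Q : Type*} [AddGroup G] [AddGroup Q]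
    {π : G →+ Q} (hπ : Function.Surjective π) : Nat.card π.ker * Nat.card Q = Nat.card G := by
  rw [← AddSubgroup.card_top (G := Q), ← AddMonoidHom.range_eq_top.2 hπ, ← AddSubgroup.index_ker,
    AddSubgroup.card_mul_index]

theorem rhoPM_pi_zmod_le_fDiv {ι : Type*} [Fintype ι] [DecidableEq ι] {n e : ι → ℕ}
    [∀ i, NeZero (n i)] (he : ∀ i, e i ∣ n i) (j : ι) {m h : ℕ} (hm : 1 ≤ m) (hh : 1 ≤ h)
    (hj : e j * m ≤ (∏ i, e i) * n j) :
    rhoPM ((i : ι) → ZMod (n i)) m h ≤ fDiv m h (∏ i, e i) := by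
  set d := ∏ i, e i
  set q : ι → ℕ := fun i => n i / e i
  have hqe : ∀ i, q i * e i = n i := fun i => Nat.div_mul_cancel (he i)
  have hpos : ∀ i, 0 < q i ∧ 0 < e i := fun i => by
    have hqe0 : q i * e i ≠ 0 := hqe i ▸ NeZero.ne (n i)
    exact ⟨Nat.pos_of_ne_zero (left_ne_zero_of_mul hqe0),
      Nat.pos_of_ne_zero (right_ne_zero_of_mul hqe0)⟩
  have : ∀ i, NeZero (q i) := fun i => ⟨(hpos i).1.ne'⟩
  have hqn : ∀ i, q i ∣ n i := fun i => Nat.div_dvd_of_dvd (he i)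
  let π := AddMonoidHom.piMap fun i => (ZMod.castHom (hqn i) (ZMod (q i))).toAddMonoidHom
  have hπ : Function.Surjective π :=
    Function.Surjective.piMap (f := fun i => ZMod.castHom (hqn i) (ZMod (q i))) fun i =>
      ZMod.ringHom_surjective _
  have hker : Nat.card π.ker = d := by
    have := π.card_ker_mul_card_of_surjective hπ
    simp only [Nat.card_pi, Nat.card_zmod, ← hqe, prod_mul_distrib] at this
    exact Nat.eq_of_mul_eq_mul_right (prod_pos fun i _ => (hpos i).1) (this.trans (mul_comm _ _))
  have hd : 0 < d := prod_pos fun i _ => (hpos i).2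
  set c := m ⌈/⌉ d
  have hc : 1 ≤ c := by
    by_contra! hc0
    have := (ceilDiv_le_iff_le_mul hd).1 (Nat.lt_one_iff.1 hc0).le
    omega
  have hcq : c ≤ q j := by
    refine (ceilDiv_le_iff_le_mul hd).2 (Nat.le_of_mul_le_mul_left ?_ (hpos j).2)
    calc e j * m ≤ d * n j := hj
      _ = e j * (d * q j) := by rw [← hqe j]; ring
  obtain ⟨X, hXc, hX⟩ := ZMod.exists_card_eq_ncard_sgnSumUpTo_le hc hcq hh
  set incl := AddMonoidHom.single (fun i => ZMod (q i)) j
  have hincl : Function.Injective incl :=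
    fun a b hab => Pi.single_injective (M := fun i => ZMod (q i)) j hab
  have hm : m ≤ #(X.image incl) * Nat.card π.ker := by
    rw [card_image_of_injective _ hincl, hXc, hker, mul_comm]
    exact le_smul_ceilDiv hd
  calc rhoPM ((i : ι) → ZMod (n i)) m h
      ≤ (sgnSumUpTo h (X.image incl)).ncard * d := hker ▸ rhoPM_le_of_surjective hπ _ hm
    _ ≤ (sgnSumUpTo h X).ncard * d :=
        Nat.mul_le_mul_right _ (ncard_sgnSumUpTo_image_le _ hincl.injOn)
    _ ≤ fDiv m h d := by rw [fDiv_eq]; exact Nat.mul_le_mul_right _ hX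

theorem stmt7 (r : ℕ) (hr : 1 ≤ r) (n : Fin r → ℕ)
    (N m h : ℕ) (hN : N = ∏ i, n i) (hm1 : 1 ≤ m) (hmN : m ≤ N) (hh : 1 ≤ h) :
    rhoPM ((i : Fin r) → ZMod (n i)) m h ≤
      sInf {k | ∃ d ∈ N.divisors,
        (∃ e : Fin r → ℕ, (∀ i, e i ∣ n i) ∧ d = ∏ i, e i ∧
          e ⟨r - 1, by omega⟩ * m ≤ d * n ⟨r - 1, by omega⟩) ∧
        k = fDiv m h d} := by
  have hN0 : N ≠ 0 := by omega
  have : ∀ i, NeZero (n i) := fun i => ⟨(prod_ne_zero_iff.1 (hN ▸ hN0)) i (mem_univ i)⟩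
  refine le_csInf ⟨_, N, Nat.mem_divisors_self N hN0, ⟨n, fun i => dvd_rfl, hN, ?_⟩, rfl⟩ ?_
  · rw [mul_comm]
    exact Nat.mul_le_mul_right _ hmN
  · rintro _ ⟨d, -, ⟨e, he, rfl, hlast⟩, rfl⟩
    exact rhoPM_pi_zmod_le_fDiv he _ hm1 hh hlast
end

section
/- For every finite abelian group G of order n, every integer m with 1 ≤ m ≤ n, and every integer h ≥ 1, the minimum of |h±A| over all m-element subsets A of G is attained on a subset that is symmetric, near-symmetric, or asymmetric; that is, ρ±(G,m,h) = min{|h±A| : A ⊆ G, |A| = m, and A is symmetric, near-symmetric, or asymmetric}. -/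
/-- `A` is symmetric: `A = -A`. -/
def SymSet {G : Type*} [AddCommGroup G] [DecidableEq G] (A : Finset G) : Prop :=
  A = A.image fun x => -x

/-- `A` is near-symmetric: it becomes symmetric after removing one of its elements. -/
def NearSymSet {G : Type*} [AddCommGroup G] [DecidableEq G] (A : Finset G) : Prop :=
  ∃ a ∈ A, SymSet (A.erase a)

/-- `A` is asymmetric: `A ∩ (-A) = ∅`. -/
def AsymSet {G : Type*} [AddCommGroup G] [DecidableEq G] (A : Finset G) : Prop :=
  Disjoint A (A.image fun x => -x)

/-!
Call `a ∈ A` unpaired if `-a ∉ A`. A set with at most one unpaired element is symmetric or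
near-symmetric, and a set containing no pair `s, -s` (with `s = -s` allowed) is asymmetric.
Otherwise pick such a pair and two unpaired elements `t₁ ≠ t₂`, and replace `t₂` by `-t₁`: this
removes two unpaired elements and does not enlarge the signed sumset. Indeed, a coefficient on
`-t₁` can be folded into the coefficient of `t₁`, which lowers the weight `∑ |λᵢ|` by an even
amount, and the pair `s, -s` absorbs any even surplus of weight without changing the sum.
-/

open Finset Function

lemma sum_apply_update_add {ι M : Type*} [DecidableEq ι] [AddCommMonoid M] {A : Finset ι}
    {i : ι} (hi : i ∈ A) (c : ι → ℤ) (v : ℤ) (F : ℤ → ι → M) :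
    ∑ a ∈ A, F (update c i v a) a + F (c i) i = ∑ a ∈ A, F (c a) a + F v i := by
  have hrest : ∑ a ∈ A.erase i, F (update c i v a) a = ∑ a ∈ A.erase i, F (c a) a :=
    sum_congr rfl fun a ha => by rw [update_of_ne (ne_of_mem_erase ha)]
  rw [← add_sum_erase A _ hi, ← add_sum_erase A _ hi, update_self, hrest]
  abel

lemma exists_natAbs_add_add_natAbs_add_eq (a b : ℤ) :
    ∃ k : ℤ, (a + k).natAbs + (b + k).natAbs = a.natAbs + b.natAbs + 2 := by
  rcases le_or_gt 0 a with ha | ha <;> rcases le_or_gt 0 b with hb | hb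
  · exact ⟨1, by omega⟩
  · exact ⟨-b + 1, by omega⟩
  · exact ⟨-a + 1, by omega⟩
  · exact ⟨-1, by omega⟩

lemma sInf_eq_sInf_of_forall_exists_le {ι : Type*} (Q P : ι → Prop) (f : ι → ℕ)
    (hQP : ∀ A, Q A → ∃ B, Q B ∧ P B ∧ f B ≤ f A) :
    sInf {k | ∃ A, Q A ∧ f A = k} = sInf {k | ∃ A, Q A ∧ P A ∧ f A = k} := by
  set S := {k | ∃ A, Q A ∧ f A = k}
  set S' := {k | ∃ A, Q A ∧ P A ∧ f A = k}
  rcases S.eq_empty_or_nonempty with hS | hS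
  · have hS' : S' = ∅ := Set.eq_empty_of_forall_notMem fun k ⟨A, hA, _, hk⟩ =>
      Set.eq_empty_iff_forall_notMem.1 hS k ⟨A, hA, hk⟩
    rw [hS, hS']
  obtain ⟨A, hA, hfA⟩ : sInf S ∈ S := Nat.sInf_mem hS
  obtain ⟨B, hB, hPB, hle⟩ := hQP A hA
  apply le_antisymm
  · obtain ⟨C, hC, -, hfC⟩ : sInf S' ∈ S' := Nat.sInf_mem ⟨f B, B, hB, hPB, rfl⟩
    exact hfC ▸ Nat.sInf_le ⟨C, hC, rfl⟩
  · exact (Nat.sInf_le (s := S') ⟨B, hB, hPB, rfl⟩).trans (hfA ▸ hle)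

section SignedSumset

variable {G : Type*} [AddCommGroup G] [DecidableEq G]

lemma sgnSum_mono {h : ℕ} {A B : Finset G} (hBA : B ⊆ A) : sgnSum h B ⊆ sgnSum h A := by
  rintro _ ⟨c, rfl, rfl⟩
  refine ⟨fun a => if a ∈ B then c a else 0, ?_, ?_⟩
  · rw [← sum_subset hBA fun a _ ha => by simp [ha]]
    exact sum_congr rfl fun a ha => by simp [ha]
  · rw [← sum_subset hBA fun a _ ha => by simp [ha]]
    exact sum_congr rfl fun a ha => by simp [ha]

lemma sgnSum_subset_sgnSum_add_two {h : ℕ} {A : Finset G} {s : G} (hs : s ∈ A) (hs' : -s ∈ A) :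
    sgnSum h A ⊆ sgnSum (h + 2) A := by
  rintro _ ⟨c, hw, rfl⟩
  by_cases hss : -s = s
  · obtain ⟨d, hd, hds⟩ : ∃ d : ℤ, (c s + d).natAbs = (c s).natAbs + 2 ∧ d • s = 0 := by
      have h2 : (2 : ℤ) • s = 0 := by rw [two_smul]; nth_rw 2 [← hss]; exact add_neg_cancel s
      rcases le_or_gt 0 (c s) with h0 | h0
      · exact ⟨2, by omega, h2⟩
      · exact ⟨-2, by omega, by rw [neg_smul, h2, neg_zero]⟩
    refine ⟨update c s (c s + d), ?_, ?_⟩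
    · have := sum_apply_update_add hs c (c s + d) fun z _ => z.natAbs
      omega
    · have := sum_apply_update_add hs c (c s + d) fun z a => z • a
      rw [add_smul, hds, add_zero] at this
      exact add_right_cancel this
  · obtain ⟨k, hk⟩ := exists_natAbs_add_add_natAbs_add_eq (c s) (c (-s))
    have hc₁ : update c s (c s + k) (-s) = c (-s) := update_of_ne hss _ _
    refine ⟨update (update c s (c s + k)) (-s) (c (-s) + k), ?_, ?_⟩
    · have h₁ := sum_apply_update_add hs c (c s + k) fun z _ => z.natAbs
      have h₂ := sum_apply_update_add hs' (update c s (c s + k)) (c (-s) + k) fun z _ => z.natAbs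
      simp only [hc₁] at h₁ h₂
      omega
    · have h₁ := sum_apply_update_add hs c (c s + k) fun z a => z • a
      have h₂ := sum_apply_update_add hs' (update c s (c s + k)) (c (-s) + k) fun z a => z • a
      simp only [hc₁] at h₁ h₂
      linear_combination (norm := module) h₂ + h₁

lemma sgnSum_subset_sgnSum_add_two_mul {w : ℕ} {A : Finset G} {s : G} (hs : s ∈ A)
    (hs' : -s ∈ A) (k : ℕ) : sgnSum w A ⊆ sgnSum (w + 2 * k) A := by
  induction k with
  | zero => rfl
  | succ k ih => exact ih.trans (sgnSum_subset_sgnSum_add_two hs hs')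

lemma exists_mem_sgnSum_of_mem_sgnSum_insert_neg {h : ℕ} {B : Finset G} {t x : G} (ht : t ∈ B)
    (ht' : -t ∉ B) (hx : x ∈ sgnSum h (insert (-t) B)) :
    ∃ w k : ℕ, w + 2 * k = h ∧ x ∈ sgnSum w B := by
  obtain ⟨c, hw, rfl⟩ := hx
  rw [sum_insert ht'] at hw ⊢
  refine ⟨_, ((c t).natAbs + (c (-t)).natAbs - (c t - c (-t)).natAbs) / 2, ?_,
    update c t (c t - c (-t)), rfl, ?_⟩
  · have := sum_apply_update_add ht c (c t - c (-t)) fun z _ => z.natAbs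
    omega
  · have := sum_apply_update_add ht c (c t - c (-t)) fun z a => z • a
    linear_combination (norm := module) this

lemma sgnSum_insert_neg_erase_subset {h : ℕ} {A : Finset G} {s t₁ t₂ : G} (hs : s ∈ A)
    (hs' : -s ∈ A) (ht₁ : t₁ ∈ A) (ht₁' : -t₁ ∉ A) (hne : t₁ ≠ t₂) :
    sgnSum h (insert (-t₁) (A.erase t₂)) ⊆ sgnSum h A := by
  intro x hx
  obtain ⟨w, k, rfl, hxw⟩ := exists_mem_sgnSum_of_mem_sgnSum_insert_neg
    (mem_erase.2 ⟨hne, ht₁⟩) (fun h => ht₁' (mem_of_mem_erase h)) hx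
  exact sgnSum_subset_sgnSum_add_two_mul hs hs' k (sgnSum_mono (erase_subset _ _) hxw)

end SignedSumset

section Unpaired

variable {G : Type*} [AddCommGroup G] [DecidableEq G]

def unpaired (A : Finset G) : Finset G := A.filter fun a => -a ∉ A

@[simp]
lemma mem_unpaired {A : Finset G} {a : G} : a ∈ unpaired A ↔ a ∈ A ∧ -a ∉ A := mem_filter

lemma symSet_of_unpaired_eq_empty {A : Finset G} (hA : unpaired A = ∅) : SymSet A := by
  have hneg : ∀ a ∈ A, -a ∈ A := fun a ha => by
    by_contra h
    simpa [hA] using mem_unpaired.2 ⟨ha, h⟩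
  ext x
  simp only [mem_image]
  exact ⟨fun hx => ⟨-x, hneg x hx, neg_neg x⟩, by rintro ⟨y, hy, rfl⟩; exact hneg y hy⟩

lemma nearSymSet_of_unpaired_eq_singleton {A : Finset G} {t : G} (hA : unpaired A = {t}) :
    NearSymSet A := by
  have ht : t ∈ A ∧ -t ∉ A := mem_unpaired.1 (hA ▸ mem_singleton_self t)
  refine ⟨t, ht.1, symSet_of_unpaired_eq_empty (eq_empty_of_forall_notMem fun a ha => ?_)⟩
  obtain ⟨⟨hat, haA⟩, hna⟩ := mem_unpaired.1 ha |>.imp_left mem_erase.1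
  have hna' : -a ∈ A := by
    by_contra h
    exact hat (mem_singleton.1 (hA ▸ mem_unpaired.2 ⟨haA, h⟩))
  refine hna (mem_erase.2 ⟨fun h => ht.2 ?_, hna'⟩)
  rwa [← h, neg_neg]

lemma asymSet_of_forall_neg_notMem {A : Finset G} (hA : ∀ a ∈ A, -a ∉ A) : AsymSet A := by
  rw [AsymSet, disjoint_left]
  intro a ha hmem
  obtain ⟨b, hb, rfl⟩ := mem_image.1 hmem
  exact hA b hb ha

lemma card_insert_neg_erase {A : Finset G} {t₁ t₂ : G} (ht₁' : -t₁ ∉ A) (ht₂ : t₂ ∈ A) :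
    (insert (-t₁) (A.erase t₂)).card = A.card := by
  rw [card_insert_of_notMem fun h => ht₁' (mem_of_mem_erase h), card_erase_add_one ht₂]

lemma unpaired_insert_neg_erase_subset {A : Finset G} {t₁ t₂ : G} (ht₁ : t₁ ∈ unpaired A)
    (ht₂ : t₂ ∈ unpaired A) (hne : t₁ ≠ t₂) :
    unpaired (insert (-t₁) (A.erase t₂)) ⊆ ((unpaired A).erase t₁).erase t₂ := by
  intro a ha
  obtain ⟨haA', han⟩ := mem_unpaired.1 ha
  rw [mem_unpaired] at ht₁ ht₂
  rcases mem_insert.1 haA' with rfl | haA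
  · rw [neg_neg] at han
    exact absurd (mem_insert_of_mem (mem_erase.2 ⟨hne, ht₁.1⟩)) han
  obtain ⟨hat₂, haA⟩ := mem_erase.1 haA
  have hat₁ : a ≠ t₁ := by
    rintro rfl
    exact han (mem_insert_self _ _)
  have hna : -a ∉ A := fun h => han (mem_insert_of_mem (mem_erase.2 ⟨fun he => ht₂.2 (by
    rwa [← he, neg_neg]), h⟩))
  exact mem_erase.2 ⟨hat₂, mem_erase.2 ⟨hat₁, mem_unpaired.2 ⟨haA, hna⟩⟩⟩

end Unpaired

theorem exists_symSet_or_nearSymSet_or_asymSet_sgnSum_subset {G : Type*} [AddCommGroup G]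
    [DecidableEq G] (h : ℕ) (A : Finset G) :
    ∃ B : Finset G, B.card = A.card ∧ (SymSet B ∨ NearSymSet B ∨ AsymSet B) ∧
      sgnSum h B ⊆ sgnSum h A := by
  induction hn : (unpaired A).card using Nat.strong_induction_on generalizing A with
  | _ n ih =>
  obtain hn0 | hn1 | hn2 : n = 0 ∨ n = 1 ∨ 1 < n := by omega
  · exact ⟨A, rfl, .inl (symSet_of_unpaired_eq_empty (card_eq_zero.1 (hn ▸ hn0))), subset_rfl⟩
  · obtain ⟨t, ht⟩ := card_eq_one.1 (hn ▸ hn1)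
    exact ⟨A, rfl, .inr (.inl (nearSymSet_of_unpaired_eq_singleton ht)), subset_rfl⟩
  by_cases hasym : ∀ a ∈ A, -a ∉ A
  · exact ⟨A, rfl, .inr (.inr (asymSet_of_forall_neg_notMem hasym)), subset_rfl⟩
  obtain ⟨s, hs, hs'⟩ : ∃ s ∈ A, -s ∈ A := by simpa using hasym
  obtain ⟨t₁, ht₁, t₂, ht₂, hne⟩ := one_lt_card.1 (hn ▸ hn2)
  have hlt : (unpaired (insert (-t₁) (A.erase t₂))).card < n := by
    have := card_le_card (unpaired_insert_neg_erase_subset ht₁ ht₂ hne)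
    rw [card_erase_of_mem (mem_erase.2 ⟨hne.symm, ht₂⟩), card_erase_of_mem ht₁] at this
    omega
  obtain ⟨B, hcard, hB, hsub⟩ := ih _ hlt _ rfl
  rw [mem_unpaired] at ht₁ ht₂
  exact ⟨B, hcard.trans (card_insert_neg_erase ht₁.2 ht₂.1), hB,
    hsub.trans (sgnSum_insert_neg_erase_subset hs hs' ht₁.1 ht₁.2 hne)⟩

theorem stmt9_general (G : Type*) [AddCommGroup G] [Fintype G] [DecidableEq G]
    (m h : ℕ) :
    rhoPM G m h =
      sInf {k | ∃ A : Finset G, A.card = m ∧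
        (SymSet A ∨ NearSymSet A ∨ AsymSet A) ∧ (sgnSum h A).ncard = k} := by
  refine sInf_eq_sInf_of_forall_exists_le _ _ _ fun A hA => ?_
  obtain ⟨B, hcard, hB, hsub⟩ := exists_symSet_or_nearSymSet_or_asymSet_sgnSum_subset h A
  exact ⟨B, hcard.trans hA, hB, Set.ncard_le_ncard hsub (Set.toFinite _)⟩

theorem stmt9 (G : Type*) [AddCommGroup G] [Fintype G] [DecidableEq G]
    (m h : ℕ) (hm1 : 1 ≤ m) (hmn : m ≤ Fintype.card G) (hh : 1 ≤ h) :
    rhoPM G m h =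
      sInf {k | ∃ A : Finset G, A.card = m ∧
        (SymSet A ∨ NearSymSet A ∨ AsymSet A) ∧ (sgnSum h A).ncard = k} :=
  stmt9_general G m h
end

section
/- For all positive integers n and m with m ≤ n, the minimum size of ΣA over all m-element subsets A of the cyclic group ℤ/nℤ satisfies ρ̂(ℤ/nℤ, m, ℕ₀) ≤ u(n, m, ℕ₀). -/
/-- `ΣA`: the set of all subset sums of `A` (including the empty sum `0`). -/
def sigmaSum {G : Type*} [AddCommGroup G] [DecidableEq G] (A : Finset G) : Finset G :=
  A.powerset.image fun B => ∑ x ∈ B, x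

/-- `ρ̂(G,m,ℕ₀)`: the minimum size of `ΣA` over all `m`-subsets of `G`. -/
noncomputable def rhoSigma (G : Type*) [AddCommGroup G] [DecidableEq G] (m : ℕ) : ℕ :=
  sInf {k | ∃ A : Finset G, A.card = m ∧ (sigmaSum A).card = k}

/-- `F_d(m) = (c·m - c²·d + 1)·d` where `c = ⌈(⌈m/d⌉ - 1)/2⌉` (note that for natural
numbers `⌈(x - 1)/2⌉ = x / 2`, with `/` denoting floor division). -/
def bigF (m d : ℕ) : ℕ :=
  ((((m + d - 1) / d) / 2) * m - (((m + d - 1) / d) / 2) ^ 2 * d + 1) * d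

/-- `u(n,m,ℕ₀) = min{F_d(m) : d ∣ n, d > 0}`. -/
noncomputable def uSigma (n m : ℕ) : ℕ :=
  sInf {k | ∃ d ∈ n.divisors, k = bigF m d}

/-!
Let `d ∣ n`, `n = d e`, and `q = ⌈m/d⌉ ≤ e`, split as `q = t + 1 + c` with `c = ⌊q/2⌋`. Take `A`
to be the first `m` points, row by row, of the box of elements `i + e j` with `-t ≤ i ≤ c` and
`0 ≤ j < d`. Since `|i| < e` and the `j` are distinct modulo `d`, these are `m` distinct
elements. A subset sum is `s + e j` with `s` in an interval of length `∑ |i|` and `j` only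
mattering modulo `d`, so `|ΣA| ≤ (∑ |i| + 1) d`, and for this balanced choice of rows
`∑ |i| = c m - c² d`.
-/

open Finset

theorem sigmaSum_image {G H : Type*} [AddCommGroup G] [AddCommGroup H] [DecidableEq G]
    [DecidableEq H] {ψ : G →+ H} {S : Finset G} (hψ : Set.InjOn ψ S) :
    sigmaSum (S.image ψ) = (sigmaSum S).image ψ := by
  simp only [sigmaSum, powerset_image, image_image]
  refine image_congr fun B hB => ?_
  simp only [Function.comp_apply]
  rw [sum_image (hψ.mono (mem_powerset.mp hB)), map_sum]

theorem sum_mem_Icc_of_subset {ι α : Type*} [AddCommGroup α] [LinearOrder α]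
    [IsOrderedAddMonoid α] {B S : Finset ι} (hBS : B ⊆ S) (f : ι → α) :
    ∑ i ∈ B, f i ∈ Set.Icc (-∑ i ∈ S, (f i)⁻) (∑ i ∈ S, (f i)⁺) := by
  constructor
  · calc -∑ i ∈ S, (f i)⁻ ≤ -∑ i ∈ B, (f i)⁻ :=
          neg_le_neg (sum_le_sum_of_subset_of_nonneg hBS fun i _ _ => negPart_nonneg _)
      _ = ∑ i ∈ B, -(f i)⁻ := (sum_neg_distrib _).symm
      _ ≤ ∑ i ∈ B, f i := sum_le_sum fun i _ => neg_le.mp (neg_le_negPart _)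
  · calc ∑ i ∈ B, f i ≤ ∑ i ∈ B, (f i)⁺ := sum_le_sum fun i _ => le_posPart _
      _ ≤ ∑ i ∈ S, (f i)⁺ := sum_le_sum_of_subset_of_nonneg hBS fun i _ _ => posPart_nonneg _

theorem sum_range_mul_add_div_eq_nsmul {M : Type*} [AddCommMonoid M] (h : ℕ → M) {a d r : ℕ}
    (hr : r ≤ d) : ∑ j ∈ range r, h ((a * d + j) / d) = r • h a := by
  rw [sum_congr rfl fun j hj => ?_, sum_const, card_range]
  have hd : 0 < d := (mem_range.mp hj).trans_le hr |>.pos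
  rw [mul_comm, Nat.mul_add_div hd, Nat.div_eq_of_lt ((mem_range.mp hj).trans_le hr), add_zero]

theorem sum_range_mul_div {M : Type*} [AddCommMonoid M] (h : ℕ → M) (a d : ℕ) :
    ∑ k ∈ range (a * d), h (k / d) = d • ∑ i ∈ range a, h i := by
  induction a with
  | zero => simp
  | succ a ih =>
    rw [Nat.succ_mul, sum_range_add, ih, sum_range_mul_add_div_eq_nsmul h le_rfl, sum_range_succ,
      smul_add]

theorem sum_range_mul_add_div {M : Type*} [AddCommMonoid M] (h : ℕ → M) {a d r : ℕ}
    (hr : r ≤ d) : ∑ k ∈ range (a * d + r), h (k / d) = d • ∑ i ∈ range a, h i + r • h a := by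
  rw [sum_range_add, sum_range_mul_div, sum_range_mul_add_div_eq_nsmul h hr]

theorem two_mul_sum_range_abs_sub (t c : ℕ) :
    2 * ∑ i ∈ range (t + c), |(i : ℤ) - t| = t * (t + 1) + c * (c - 1) := by
  induction c with
  | zero =>
    simp only [add_zero, CharP.cast_eq_zero, zero_mul]
    induction t with
    | zero => simp
    | succ t ih =>
      have hshift : ∀ i ∈ range t, |((i + 1 : ℕ) : ℤ) - (t + 1 : ℕ)| = |(i : ℤ) - t| :=
        fun i _ => by push_cast; ring_nf
      rw [sum_range_succ', mul_add, sum_congr rfl hshift, ih]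
      simp only [CharP.cast_eq_zero, zero_sub]
      push_cast
      rw [abs_neg, abs_of_nonneg (by positivity)]
      ring
  | succ c ih =>
    rw [← add_assoc, sum_range_succ, mul_add, ih]
    push_cast
    rw [add_sub_cancel_left, abs_of_nonneg (by positivity)]
    ring

section Grid

variable (d e : ℕ)

def gridHom : ℤ × ℤ →+ ZMod (d * e) :=
  AddMonoidHom.mk' (fun p => ((p.1 + e * p.2 : ℤ) : ZMod (d * e))) fun p q => by
    simp only [Prod.fst_add, Prod.snd_add]; push_cast; ring

variable {d e}

theorem gridHom_apply (p : ℤ × ℤ) : gridHom d e p = ((p.1 + e * p.2 : ℤ) : ZMod (d * e)) := rfl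

theorem gridHom_eq_iff_dvd (p q : ℤ × ℤ) :
    gridHom d e p = gridHom d e q ↔ (d * e : ℤ) ∣ (p.1 - q.1) + e * (p.2 - q.2) := by
  rw [gridHom_apply, gridHom_apply, ← sub_eq_zero, ← Int.cast_sub,
    ZMod.intCast_zmod_eq_zero_iff_dvd]
  push_cast
  ring_nf

theorem gridHom_emod (i j : ℤ) : gridHom d e (i, j % d) = gridHom d e (i, j) := by
  rw [gridHom_eq_iff_dvd]
  exact ⟨-(j / d), by rw [Int.emod_def]; ring⟩

theorem gridHom_injOn (a b : ℤ) :
    Set.InjOn (gridHom d e) (Set.Ico a (a + e) ×ˢ Set.Ico b (b + d)) := by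
  rintro ⟨i, j⟩ ⟨hi, hj⟩ ⟨i', j'⟩ ⟨hi', hj'⟩ h
  simp only [Set.mem_Ico] at hi hj hi' hj'
  rw [gridHom_eq_iff_dvd] at h
  have he : (e : ℤ) ≠ 0 := by omega
  have hi_eq : i - i' = 0 := by
    have hdvd : (e : ℤ) ∣ i - i' := by
      rw [← dvd_add_left (dvd_mul_right (e : ℤ) (j - j'))]
      exact (dvd_mul_left _ _).trans h
    exact Int.eq_zero_of_abs_lt_dvd hdvd (abs_lt.mpr ⟨by omega, by omega⟩)
  rw [hi_eq, zero_add, mul_comm (d : ℤ), mul_dvd_mul_iff_left he] at h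
  have hj_eq : j - j' = 0 := Int.eq_zero_of_abs_lt_dvd h (abs_lt.mpr ⟨by omega, by omega⟩)
  ext <;> simp only <;> omega

theorem card_sigmaSum_image_gridHom_le (hd : 0 < d) (S : Finset (ℤ × ℤ))
    (hS : Set.InjOn (gridHom d e) S) :
    ((sigmaSum (S.image (gridHom d e))).card : ℤ) ≤ (∑ p ∈ S, |p.1| + 1) * d := by
  set box := Icc (-∑ p ∈ S, p.1⁻) (∑ p ∈ S, p.1⁺) ×ˢ Ico 0 (d : ℤ)
  have hsub : sigmaSum (S.image (gridHom d e)) ⊆ box.image (gridHom d e) := by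
    rw [sigmaSum_image hS]
    intro x hx
    simp only [sigmaSum, mem_image, mem_powerset] at hx
    obtain ⟨_, ⟨B, hB, rfl⟩, rfl⟩ := hx
    refine mem_image.mpr ⟨((∑ p ∈ B, p).1, (∑ p ∈ B, p).2 % d), mem_product.mpr ⟨?_, ?_⟩,
      gridHom_emod _ _⟩
    · rw [Prod.fst_sum, mem_Icc]
      exact sum_mem_Icc_of_subset hB Prod.fst
    · exact mem_Ico.mpr ⟨Int.emod_nonneg _ (by omega), Int.emod_lt_of_pos _ (by omega)⟩
  have hbox : (box.card : ℤ) = (∑ p ∈ S, |p.1| + 1) * d := by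
    have hwidth : ∑ p ∈ S, p.1⁺ + 1 - -∑ p ∈ S, p.1⁻ = ∑ p ∈ S, |p.1| + 1 := by
      simp only [← posPart_add_negPart, sum_add_distrib]
      ring
    rw [card_product, Int.card_Icc, Int.card_Ico, sub_zero, Int.toNat_natCast, Nat.cast_mul,
      hwidth, Int.toNat_of_nonneg (by positivity)]
  rw [← hbox]
  exact_mod_cast (card_le_card hsub).trans card_image_le

end Grid

def gridIndex (d t k : ℕ) : ℤ × ℤ := (((k / d : ℕ) : ℤ) - t, ((k % d : ℕ) : ℤ))

theorem gridIndex_injective (d t : ℕ) : Function.Injective (gridIndex d t) := by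
  intro k k' h
  simp only [gridIndex, Prod.mk.injEq, sub_left_inj, Nat.cast_inj] at h
  rw [← Nat.div_add_mod k d, ← Nat.div_add_mod k' d, h.1, h.2]

theorem sum_range_abs_div_sub {d t c r : ℕ} (hr : r ≤ d) (htc : t + 1 = c ∨ t = c) :
    ∑ k ∈ range ((t + c) * d + r), |((k / d : ℕ) : ℤ) - t| = c * (t * d + r) := by
  have hrows : ∑ i ∈ range (t + c), |(i : ℤ) - t| = t * c := by
    have := two_mul_sum_range_abs_sub t c
    rcases htc with rfl | rfl <;> push_cast at this ⊢ <;> linarith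
  rw [sum_range_mul_add_div (fun i => |(i : ℤ) - t|) hr, nsmul_eq_mul, nsmul_eq_mul, hrows]
  push_cast
  rw [add_sub_cancel_left, abs_of_nonneg (by positivity)]
  ring

theorem exists_card_eq_card_sigmaSum_le {d e t c r : ℕ} (hd : 0 < d) (hr : r ≤ d)
    (htc : t + 1 = c ∨ t = c) (he : t + c < e) :
    ∃ A : Finset (ZMod (d * e)),
      A.card = (t + c) * d + r ∧ (sigmaSum A).card ≤ (c * (t * d + r) + 1) * d := by
  set S := (range ((t + c) * d + r)).image (gridIndex d t)
  have hbox : (S : Set (ℤ × ℤ)) ⊆ Set.Ico (-t : ℤ) (-t + e) ×ˢ Set.Ico 0 (0 + (d : ℤ)) := by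
    intro p hp
    obtain ⟨k, hk, rfl⟩ := mem_image.mp (mem_coe.mp hp)
    have hrow : k / d < t + c + 1 := Nat.div_lt_of_lt_mul (by rw [mem_range] at hk; nlinarith)
    have hcol := Nat.mod_lt k hd
    dsimp only [gridIndex]
    generalize k / d = i at hrow
    generalize k % d = j at hcol
    refine ⟨⟨?_, ?_⟩, ?_, ?_⟩ <;> omega
  have hinj := (gridHom_injOn (d := d) (e := e) _ _).mono hbox
  refine ⟨S.image (gridHom d e), ?_, ?_⟩
  · rw [card_image_of_injOn hinj, card_image_of_injective _ (gridIndex_injective d t), card_range]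
  · have hcard := card_sigmaSum_image_gridHom_le hd S hinj
    rw [sum_image (gridIndex_injective d t).injOn] at hcard
    simp only [gridIndex] at hcard
    rw [sum_range_abs_div_sub hr htc] at hcard
    exact_mod_cast hcard

theorem exists_bigF_eq {m d e : ℕ} (hd : 0 < d) (he : 0 < e) (hm : m ≤ d * e) :
    ∃ t c r, m = (t + c) * d + r ∧ r ≤ d ∧ (t + 1 = c ∨ t = c) ∧ t + c < e ∧
      bigF m d = (c * (t * d + r) + 1) * d := by
  obtain ⟨q, hq⟩ : ∃ q, (m + d - 1) / d = q := ⟨_, rfl⟩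
  have hq_lo : q * d ≤ m + d - 1 := hq ▸ Nat.div_mul_le_self _ _
  have hq_hi : m + d - 1 < q * d + d := hq ▸ Nat.lt_div_mul_add hd
  have hqe : q < e + 1 := by
    refine Nat.lt_of_mul_lt_mul_right (a := d) ?_
    rw [add_one_mul, mul_comm e]
    omega
  have hrows : (q - 1 - q / 2 + q / 2) * d = q * d - d := by
    rw [← Nat.sub_one_mul]
    congr 1
    omega
  have hdecomp : m = (q - 1 - q / 2 + q / 2) * d + (m - (q * d - d)) := by
    rw [hrows]
    omega
  refine ⟨q - 1 - q / 2, q / 2, m - (q * d - d), hdecomp, by omega, by omega, by omega, ?_⟩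
  have hcm : q / 2 * m =
      q / 2 * ((q - 1 - q / 2) * d + (m - (q * d - d))) + (q / 2) ^ 2 * d := by
    conv_lhs => rw [hdecomp]
    ring
  rw [bigF, hq, hcm, Nat.add_sub_cancel]

theorem stmt11_general (n m : ℕ) (hn : 1 ≤ n) (hmn : m ≤ n) :
    rhoSigma (ZMod n) m ≤ uSigma n m := by
  obtain ⟨d, hd, hu⟩ : uSigma n m ∈ {k | ∃ d ∈ n.divisors, k = bigF m d} :=
    Nat.sInf_mem ⟨_, n, Nat.mem_divisors_self n (by omega), rfl⟩
  obtain ⟨⟨e, rfl⟩, -⟩ := Nat.mem_divisors.mp hd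
  have hd0 : 0 < d := Nat.pos_of_mem_divisors hd
  obtain ⟨t, c, r, rfl, hr, htc, hte, hF⟩ :=
    exists_bigF_eq hd0 (Nat.pos_of_mul_pos_left (by omega : 0 < d * e)) hmn
  obtain ⟨A, hA, hsums⟩ := exists_card_eq_card_sigmaSum_le hd0 hr htc hte
  calc rhoSigma (ZMod (d * e)) _ ≤ (sigmaSum A).card := Nat.sInf_le ⟨A, hA, rfl⟩
    _ ≤ _ := hsums
    _ = uSigma (d * e) _ := by rw [hu, hF]

theorem stmt11 (n m : ℕ) (hn : 1 ≤ n) (hm : 1 ≤ m) (hmn : m ≤ n) :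
    rhoSigma (ZMod n) m ≤ uSigma n m :=
  stmt11_general n m hn hmn
end
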